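/- arXiv:1111.4576 — 8 statements merged into one kernel-verified Lean document; each statement's English description precedes it below -/
import Mathlib

section
/- For any dimension n ≥ 1, radius r > 0, and index i, the integral of the square of the i-th coordinate over the ball {x ∈ ℝⁿ : ‖x‖₂ ≤ r} equals Vₙ rⁿ⁺² / (n+2), where Vₙ is the volume of the unit ball in ℝⁿ. -/
open MeasureTheory Metric Real
open scoped RealInnerProductSpace

noncomputable def Vball (n : ℕ) : ℝ :=
  (volume (closedBall (0 : EuclideanSpace ℝ (Fin n)) 1)).toReal

noncomputable def mApp {n : ℕ} (G : Matrix (Fin n) (Fin n) ℝ)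
    (x : EuclideanSpace ℝ (Fin n)) : EuclideanSpace ℝ (Fin n) :=
  Matrix.toEuclideanLin G x

noncomputable def frobSq {n : ℕ} (G : Matrix (Fin n) (Fin n) ℝ) : ℝ :=
  ∑ i, ∑ j, (G i j) ^ 2

noncomputable def quadF {n : ℕ} (p : ℝ × EuclideanSpace ℝ (Fin n) × Matrix (Fin n) (Fin n) ℝ)
    (x : EuclideanSpace ℝ (Fin n)) : ℝ :=
  p.1 + ⟪p.2.1, x⟫ + ⟪x, mApp p.2.2 x⟫ / 2

noncomputable def gradF {n : ℕ} (p : ℝ × EuclideanSpace ℝ (Fin n) × Matrix (Fin n) (Fin n) ℝ)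
    (x : EuclideanSpace ℝ (Fin n)) : EuclideanSpace ℝ (Fin n) :=
  mApp p.2.2 x + p.2.1
lemma coord_integral_symm (n : ℕ) (r : ℝ) (i j : Fin n) :
    ∫ x in closedBall (0 : EuclideanSpace ℝ (Fin n)) r, (x i) ^ 2 =
    ∫ x in closedBall (0 : EuclideanSpace ℝ (Fin n)) r, (x j) ^ 2 := by
  set e : EuclideanSpace ℝ (Fin n) ≃ₗᵢ[ℝ] EuclideanSpace ℝ (Fin n) :=
    LinearIsometryEquiv.piLpCongrLeft 2 ℝ ℝ (Equiv.swap i j) with he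
  have hpre : e ⁻¹' closedBall (0 : EuclideanSpace ℝ (Fin n)) r
      = closedBall (0 : EuclideanSpace ℝ (Fin n)) r := by
    ext x
    simp [mem_closedBall, dist_zero_right, e.norm_map]
  have := e.measurePreserving.setIntegral_preimage_emb
    e.toHomeomorph.measurableEmbedding
    (fun x : EuclideanSpace ℝ (Fin n) => (x j) ^ 2)
    (closedBall (0 : EuclideanSpace ℝ (Fin n)) r)
  rw [hpre] at this
  rw [← this]
  refine setIntegral_congr_fun measurableSet_closedBall fun x _ => ?_
  have : (e x) j = x i := by
    rw [he]
    rw [LinearIsometryEquiv.piLpCongrLeft_apply]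
    show x ((Equiv.swap i j).symm j) = x i
    rw [Equiv.symm_swap, Equiv.swap_apply_right]
  rw [this]

lemma integrableOn_coord_sq (n : ℕ) (r : ℝ) (j : Fin n) :
    IntegrableOn (fun x : EuclideanSpace ℝ (Fin n) => (x j) ^ 2)
      (closedBall (0 : EuclideanSpace ℝ (Fin n)) r) volume := by
  have hc : Continuous (fun x : EuclideanSpace ℝ (Fin n) => (x j) ^ 2) := by
    have : Continuous (fun x : EuclideanSpace ℝ (Fin n) => x j) :=
      (EuclideanSpace.proj (𝕜 := ℝ) j).continuous
    exact this.pow 2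
  exact ContinuousOn.integrableOn_compact (isCompact_closedBall _ _) hc.continuousOn

theorem stmt_0 (n : ℕ) (hn : 1 ≤ n) (r : ℝ) (hr : 0 < r) (i : Fin n) :
    ∫ x in closedBall (0 : EuclideanSpace ℝ (Fin n)) r, (x i) ^ 2 =
      Vball n * r ^ (n + 2) / (n + 2) := by
  haveI : Nontrivial (EuclideanSpace ℝ (Fin n)) :=
    ⟨0, EuclideanSpace.single ⟨0, hn⟩ 1, by
      intro h
      have := congrArg (fun v : EuclideanSpace ℝ (Fin n) => v ⟨0, hn⟩) h.symm
      simp [EuclideanSpace.single_apply] at this⟩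
  set I : ℝ := ∫ x in closedBall (0 : EuclideanSpace ℝ (Fin n)) r, (x i) ^ 2 with hI
  -- Step 1: sum of coordinate integrals equals the integral of ‖x‖²
  have hsum : ∫ x in closedBall (0 : EuclideanSpace ℝ (Fin n)) r, ‖x‖ ^ 2
      = (n : ℝ) * I := by
    have h1 : ∀ x : EuclideanSpace ℝ (Fin n), ‖x‖ ^ 2 = ∑ j, (x j) ^ 2 := by
      intro x
      rw [EuclideanSpace.norm_eq, Real.sq_sqrt (by positivity)]
      simp [sq_abs]
    calc ∫ x in closedBall (0 : EuclideanSpace ℝ (Fin n)) r, ‖x‖ ^ 2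
        = ∫ x in closedBall (0 : EuclideanSpace ℝ (Fin n)) r, ∑ j, (x j) ^ 2 := by
          simp_rw [h1]
      _ = ∑ j, ∫ x in closedBall (0 : EuclideanSpace ℝ (Fin n)) r, (x j) ^ 2 :=
          integral_finset_sum _ fun j _ => integrableOn_coord_sq n r j
      _ = ∑ _j : Fin n, I := by
          refine Finset.sum_congr rfl fun j _ => ?_
          rw [hI, coord_integral_symm n r i j]
      _ = (n : ℝ) * I := by simp [mul_comm]
  -- Step 2: compute the integral of ‖x‖² via polar coordinates
  have hnorm : ∫ x in closedBall (0 : EuclideanSpace ℝ (Fin n)) r, ‖x‖ ^ 2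
      = (n : ℝ) * Vball n * r ^ (n + 2) / ((n : ℝ) + 2) := by
    have hf : ∀ x : EuclideanSpace ℝ (Fin n),
        (closedBall (0 : EuclideanSpace ℝ (Fin n)) r).indicator (fun x => ‖x‖ ^ 2) x
          = (fun t : ℝ => if t ≤ r then t ^ 2 else 0) ‖x‖ := by
      intro x
      by_cases hx : ‖x‖ ≤ r
      · rw [Set.indicator_of_mem (by simpa [mem_closedBall, dist_zero_right] using hx)]
        simp [hx]
      · rw [Set.indicator_of_notMem (by simpa [mem_closedBall, dist_zero_right] using hx)]
        simp [hx]
    rw [← integral_indicator measurableSet_closedBall]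
    simp_rw [hf]
    rw [integral_fun_norm_addHaar (volume : Measure (EuclideanSpace ℝ (Fin n)))
      (fun t : ℝ => if t ≤ r then t ^ 2 else 0)]
    have hdim : Module.finrank ℝ (EuclideanSpace ℝ (Fin n)) = n :=
      finrank_euclideanSpace_fin
    rw [hdim]
    have hball : (volume (ball (0 : EuclideanSpace ℝ (Fin n)) 1)).toReal = Vball n := by
      rw [Vball, Measure.addHaar_closedBall_eq_addHaar_ball]
    have hrad : ∫ y in Set.Ioi (0 : ℝ), y ^ (n - 1) • (if y ≤ r then y ^ 2 else 0)
        = r ^ (n + 2) / ((n : ℝ) + 2) := by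
      have hind : ∀ y ∈ Set.Ioi (0 : ℝ),
          y ^ (n - 1) • (if y ≤ r then y ^ 2 else 0)
            = (Set.Iic r).indicator (fun y => y ^ (n + 1)) y := by
        intro y hy
        by_cases hyr : y ≤ r
        · rw [Set.indicator_of_mem (Set.mem_Iic.mpr hyr)]
          simp only [if_pos hyr, smul_eq_mul]
          rw [← pow_add]
          congr 1
          omega
        · rw [Set.indicator_of_notMem (by simpa using hyr)]
          simp [hyr]
      rw [setIntegral_congr_fun measurableSet_Ioi hind,
        setIntegral_indicator measurableSet_Iic, Set.Ioi_inter_Iic,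
        ← intervalIntegral.integral_of_le hr.le, integral_pow]
      push_cast
      ring
    rw [measureReal_def, hball, hrad]
    simp only [nsmul_eq_mul, smul_eq_mul]
    ring
  -- Combine
  have hne : (n : ℝ) ≠ 0 := by positivity
  have hnI : (n : ℝ) * I = (n : ℝ) * (Vball n * r ^ (n + 2) / ((n : ℝ) + 2)) := by
    rw [← hsum, hnorm]; ring
  have hI' := mul_left_cancel₀ hne hnI
  rw [hI']
end

section
/- Let Q : ℝⁿ → ℝ be a quadratic function, x₀ ∈ ℝⁿ, r > 0, and B = {x : ‖x - x₀‖₂ ≤ r}. Then ∫_B ‖∇Q(x)‖₂² dx = Vₙ rⁿ [ (r²/(n+2)) ‖∇²Q‖_F² + ‖∇Q(x₀)‖₂² ], where Vₙ is the volume of the unit ball in ℝⁿ. -/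
open MeasureTheory Metric Real
open scoped RealInnerProductSpace

/-! ### Auxiliary lemmas -/

local notation "Eu" n => EuclideanSpace ℝ (Fin n)

lemma mApp_apply {n : ℕ} (G : Matrix (Fin n) (Fin n) ℝ) (x : Eu n) (i : Fin n) :
    mApp G x i = ∑ j, G i j * x j := by
  simp [mApp, Matrix.toEuclideanLin, Matrix.mulVec, dotProduct]

lemma mApp_continuous {n : ℕ} (G : Matrix (Fin n) (Fin n) ℝ) :
    Continuous (mApp G) :=
  LinearMap.continuous_of_finiteDimensional (Matrix.toEuclideanLin G)

lemma symm_inner {n : ℕ} {G : Matrix (Fin n) (Fin n) ℝ} (hG : G.IsSymm)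
    (u v : Eu n) : ⟪u, mApp G v⟫ = ⟪mApp G u, v⟫ := by
  have hH : G.IsHermitian := by
    rw [Matrix.IsHermitian, Matrix.conjTranspose]
    ext i j
    simpa using hG.apply i j
  exact ((Matrix.isHermitian_iff_isSymmetric.mp hH) u v).symm

lemma grad_quad {n : ℕ} (c : ℝ) (g : Eu n)
    (G : Matrix (Fin n) (Fin n) ℝ) (hG : G.IsSymm) (x : Eu n) :
    gradient (fun x => c + ⟪g, x⟫ + ⟪x, mApp G x⟫ / 2) x = mApp G x + g := by
  set T : (Eu n) →L[ℝ] (Eu n) :=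
    LinearMap.toContinuousLinearMap (Matrix.toEuclideanLin G) with hT
  have hTa : ∀ y, T y = mApp G y := fun y => rfl
  have h2 : HasFDerivAt (fun y : Eu n => ⟪y, T y⟫)
      ((fderivInnerCLM ℝ (x, T x)).comp ((ContinuousLinearMap.id ℝ _).prod T)) x :=
    (hasFDerivAt_id x).inner ℝ T.hasFDerivAt
  have h1 : HasFDerivAt (fun y : Eu n => c + ⟪g, y⟫ + ⟪y, T y⟫ / 2)
      (innerSL ℝ g + (2:ℝ)⁻¹ •
        ((fderivInnerCLM ℝ (x, T x)).comp ((ContinuousLinearMap.id ℝ _).prod T))) x := by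
    have := ((hasFDerivAt_const c x).add (innerSL ℝ g).hasFDerivAt).add (h2.const_smul (2:ℝ)⁻¹)
    refine HasFDerivAt.congr_of_eventuallyEq (this.congr_fderiv (by simp))
      (Filter.Eventually.of_forall fun y => ?_)
    simp [div_eq_inv_mul]
  have hgrad : HasGradientAt (fun y : Eu n => c + ⟪g, y⟫ + ⟪y, T y⟫ / 2)
      (mApp G x + g) x := by
    rw [hasGradientAt_iff_hasFDerivAt]
    refine h1.congr_fderiv ?_
    symm
    ext h
    simp only [InnerProductSpace.toDual_apply_apply, ContinuousLinearMap.add_apply,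
      ContinuousLinearMap.smul_apply, ContinuousLinearMap.comp_apply,
      ContinuousLinearMap.prod_apply, ContinuousLinearMap.id_apply, innerSL_apply_apply,
      fderivInnerCLM_apply, smul_eq_mul]
    rw [hTa, hTa, symm_inner hG x h, real_inner_comm h (mApp G x),
      inner_add_left (𝕜 := ℝ) (mApp G x) g h]
    ring_nf
    rw [real_inner_comm h (mApp G x), add_comm]
  simpa [hTa] using hgrad.gradient

lemma integral_ball_comp_isometry {n : ℕ} (e : (Eu n) ≃ₗᵢ[ℝ] (Eu n)) (r : ℝ) (f : (Eu n) → ℝ) :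
    ∫ x in closedBall (0 : Eu n) r, f (e x) = ∫ x in closedBall (0 : Eu n) r, f x := by
  have h := (e.measurePreserving).setIntegral_preimage_emb
    (e.toHomeomorph.measurableEmbedding) f (closedBall 0 r)
  have hs : ⇑e ⁻¹' closedBall (0 : Eu n) r = closedBall 0 r := by
    ext y
    simp only [Set.mem_preimage, mem_closedBall, dist_zero_right]
    rw [e.norm_map]
  rw [← h, hs]

lemma integral_inner_ball_zero {n : ℕ} (r : ℝ) (v : Eu n) :
    ∫ x in closedBall (0 : Eu n) r, ⟪x, v⟫ = 0 := by
  have h := integral_ball_comp_isometry (LinearIsometryEquiv.neg ℝ (E := Eu n)) r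
    (fun x => ⟪x, v⟫)
  simp only [LinearIsometryEquiv.coe_neg, inner_neg_left] at h
  rw [integral_neg] at h
  linarith

lemma vball_eq_ball {n : ℕ} (hn : 0 < n) :
    Vball n = (volume (ball (0 : Eu n) 1)).toReal := by
  haveI : Nontrivial (Eu n) := by
    apply Module.nontrivial_of_finrank_pos (R := ℝ)
    rw [finrank_euclideanSpace_fin]; exact hn
  rw [Vball, Measure.addHaar_closedBall_eq_addHaar_ball]

lemma volume_closedBall_eu {n : ℕ} (x₀ : Eu n) {r : ℝ} (hr : 0 < r) :
    (volume (closedBall x₀ r)).toReal = Vball n * r ^ n := by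
  rcases Nat.eq_zero_or_pos n with hn | hn
  · subst hn
    haveI : Subsingleton (EuclideanSpace ℝ (Fin 0)) := ⟨fun a b => by ext i; exact i.elim0⟩
    have h1 : closedBall x₀ r = Set.univ := by
      ext y; simp [mem_closedBall, Subsingleton.elim y x₀, hr.le]
    have h2 : closedBall (0 : EuclideanSpace ℝ (Fin 0)) 1 = Set.univ := by
      ext y; simp [mem_closedBall, Subsingleton.elim y (0 : EuclideanSpace ℝ (Fin 0))]
    simp [h1, Vball, h2]
  · rw [Measure.addHaar_closedBall volume x₀ hr.le, vball_eq_ball hn,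
      finrank_euclideanSpace_fin]
    rw [ENNReal.toReal_mul, ENNReal.toReal_ofReal (by positivity)]
    ring

lemma integral_normsq_ball {n : ℕ} (hn : 0 < n) {r : ℝ} (hr : 0 < r) :
    ∫ x in closedBall (0 : Eu n) r, ‖x‖ ^ 2
      = n * (Vball n * r ^ (n + 2) / (n + 2)) := by
  haveI : Nontrivial (Eu n) := by
    apply Module.nontrivial_of_finrank_pos (R := ℝ)
    rw [finrank_euclideanSpace_fin]; exact hn
  set f : ℝ → ℝ := Set.indicator (Set.Icc 0 r) (fun y => y ^ 2) with hf
  have h1 : ∫ x in closedBall (0 : Eu n) r, ‖x‖ ^ 2 = ∫ x : Eu n, f ‖x‖ := by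
    rw [← integral_indicator measurableSet_closedBall]
    congr 1 with x
    by_cases hx : ‖x‖ ≤ r
    · rw [Set.indicator_of_mem (by simpa [mem_closedBall, dist_zero_right] using hx),
        hf, Set.indicator_of_mem (by exact ⟨norm_nonneg x, hx⟩)]
    · rw [Set.indicator_of_notMem (by simpa [mem_closedBall, dist_zero_right] using hx),
        hf, Set.indicator_of_notMem (fun h => hx h.2)]
  rw [h1, integral_fun_norm_addHaar volume f]
  have hdim : Module.finrank ℝ (Eu n) = n := finrank_euclideanSpace_fin
  rw [hdim]
  have h2 : ∫ y in Set.Ioi (0:ℝ), y ^ (n-1) • f y = r ^ (n + 2) / (n + 2) := by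
    have : ∀ y : ℝ, y ^ (n-1) • f y
        = Set.indicator (Set.Icc 0 r) (fun y => y ^ (n-1) * y ^ 2) y := by
      intro y
      rw [hf, smul_eq_mul]
      by_cases hy : y ∈ Set.Icc (0:ℝ) r
      · rw [Set.indicator_of_mem hy, Set.indicator_of_mem hy]
      · rw [Set.indicator_of_notMem hy, Set.indicator_of_notMem hy, mul_zero]
    simp_rw [this]
    rw [integral_indicator measurableSet_Icc, Measure.restrict_restrict measurableSet_Icc]
    have hset : Set.Icc (0:ℝ) r ∩ Set.Ioi 0 = Set.Ioc 0 r := by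
      ext y; simp only [Set.mem_inter_iff, Set.mem_Icc, Set.mem_Ioi, Set.mem_Ioc]
      constructor
      · rintro ⟨⟨_, h2⟩, h3⟩; exact ⟨h3, h2⟩
      · rintro ⟨h1, h2⟩; exact ⟨⟨h1.le, h2⟩, h1⟩
    rw [hset]
    have hexp : ∀ y : ℝ, y ^ (n-1) * y ^ 2 = y ^ (n+1) := by
      intro y; rw [← pow_add]; congr 1; omega
    simp_rw [hexp]
    rw [← intervalIntegral.integral_of_le hr.le, integral_pow]
    push_cast
    ring_nf
  rw [h2, measureReal_def, ← vball_eq_ball hn]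
  simp only [nsmul_eq_mul, smul_eq_mul]
  ring

lemma normsq_eq {n : ℕ} (x : Eu n) : ‖x‖ ^ 2 = ∑ i, (x i) ^ 2 := by
  rw [EuclideanSpace.norm_eq, Real.sq_sqrt (by positivity)]
  simp [Real.norm_eq_abs, sq_abs]

lemma coord_continuous {n : ℕ} (j : Fin n) : Continuous (fun x : Eu n => x j) :=
  (EuclideanSpace.proj j).continuous

lemma cont_integrableOn {n : ℕ} (r : ℝ) {f : (Eu n) → ℝ} (hf : Continuous f) :
    IntegrableOn f (closedBall (0 : Eu n) r) volume :=
  ContinuousOn.integrableOn_compact (isCompact_closedBall 0 r) hf.continuousOn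

lemma moment_offdiag {n : ℕ} (r : ℝ) {j k : Fin n} (hjk : j ≠ k) :
    ∫ x in closedBall (0 : Eu n) r, x j * x k = 0 := by
  classical
  set e : (Eu n) ≃ₗᵢ[ℝ] (Eu n) :=
    LinearIsometryEquiv.piLpCongrRight 2
      (fun i => if i = j then LinearIsometryEquiv.neg ℝ else LinearIsometryEquiv.refl ℝ ℝ) with he
  have happ : ∀ (x : Eu n) (i : Fin n), e x i = if i = j then -(x i) else x i := by
    intro x i
    rw [he, LinearIsometryEquiv.piLpCongrRight_apply]
    by_cases hi : i = j
    · subst hi; simp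
    · simp [hi]
  have h := integral_ball_comp_isometry e r (fun x => x j * x k)
  have hkj : (k = j) = False := eq_false (fun hh => hjk hh.symm)
  simp only [happ, hkj, if_true, if_false, neg_mul] at h
  rw [integral_neg] at h
  linarith

lemma moment_diag {n : ℕ} {r : ℝ} (hr : 0 < r) (j : Fin n) :
    ∫ x in closedBall (0 : Eu n) r, (x j) ^ 2
      = Vball n * r ^ (n + 2) / (n + 2) := by
  classical
  have hn : 0 < n := j.pos
  have hswap : ∀ k : Fin n, (∫ x in closedBall (0 : Eu n) r, (x k) ^ 2)
      = ∫ x in closedBall (0 : Eu n) r, (x j) ^ 2 := by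
    intro k
    have h := integral_ball_comp_isometry
      (LinearIsometryEquiv.piLpCongrLeft 2 ℝ ℝ (Equiv.swap j k)) r
      (fun x => (x k) ^ 2)
    rw [← h]
    congr 1 with x
    rw [LinearIsometryEquiv.piLpCongrLeft_apply]
    simp only [Equiv.piCongrLeft'_apply, Equiv.symm_swap]
    rw [Equiv.swap_apply_right]
  have hsum : ∑ k : Fin n, (∫ x in closedBall (0 : Eu n) r, (x k) ^ 2)
      = ∫ x in closedBall (0 : Eu n) r, ‖x‖ ^ 2 := by
    rw [← integral_finset_sum]
    · apply setIntegral_congr_fun measurableSet_closedBall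
      intro x _
      exact (normsq_eq x).symm
    · intro k _
      exact cont_integrableOn r ((coord_continuous k).pow 2)
  have hval := integral_normsq_ball hn hr
  have hcard : ∑ k : Fin n, (∫ x in closedBall (0 : Eu n) r, (x k) ^ 2)
      = n * ∫ x in closedBall (0 : Eu n) r, (x j) ^ 2 := by
    rw [Finset.sum_congr rfl (fun k _ => hswap k), Finset.sum_const]
    simp [nsmul_eq_mul]
  have : (n : ℝ) * ∫ x in closedBall (0 : Eu n) r, (x j) ^ 2
      = n * (Vball n * r ^ (n + 2) / (n + 2)) := by
    rw [← hcard, hsum, hval]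
  have hn' : (n : ℝ) ≠ 0 := Nat.cast_ne_zero.mpr hn.ne'
  field_simp at this
  exact mul_left_cancel₀ hn' (by linarith [this])

lemma moment {n : ℕ} {r : ℝ} (hr : 0 < r) (j k : Fin n) :
    ∫ x in closedBall (0 : Eu n) r, x j * x k
      = if j = k then Vball n * r ^ (n + 2) / (n + 2) else 0 := by
  by_cases h : j = k
  · subst h
    rw [if_pos rfl, ← moment_diag hr j]
    apply setIntegral_congr_fun measurableSet_closedBall
    intro x _
    simp [pow_two]
  · rw [if_neg h]
    exact moment_offdiag r h

lemma inner_mApp_left {n : ℕ} (G : Matrix (Fin n) (Fin n) ℝ) (y v : Eu n) :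
    ⟪mApp G y, v⟫ = ⟪y, mApp G.transpose v⟫ := by
  simp only [PiLp.inner_apply, RCLike.inner_apply, starRingEnd_apply, star_trivial,
    mApp_apply, Matrix.transpose_apply, Finset.sum_mul, Finset.mul_sum]
  rw [Finset.sum_comm]
  apply Finset.sum_congr rfl
  intro i _
  apply Finset.sum_congr rfl
  intro l _
  ring

lemma expand_normsq {n : ℕ} (G : Matrix (Fin n) (Fin n) ℝ) (y : Eu n) :
    ‖mApp G y‖ ^ 2 = ∑ p : Fin n × Fin n × Fin n,
      G p.1 p.2.1 * G p.1 p.2.2 * (y p.2.1 * y p.2.2) := by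
  rw [normsq_eq, Fintype.sum_prod_type]
  apply Finset.sum_congr rfl
  intro i _
  rw [Fintype.sum_prod_type, mApp_apply, pow_two, Finset.sum_mul_sum]
  apply Finset.sum_congr rfl
  intro j _
  apply Finset.sum_congr rfl
  intro k _
  ring

lemma key_integral {n : ℕ} (G : Matrix (Fin n) (Fin n) ℝ) (v : Eu n) {r : ℝ} (hr : 0 < r) :
    ∫ y in closedBall (0 : Eu n) r, ‖mApp G y + v‖ ^ 2
      = Vball n * r ^ n * (r ^ 2 / (n + 2) * frobSq G + ‖v‖ ^ 2) := by
  have hκpos : (0:ℝ) < n + 2 := by positivity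
  set κ : ℝ := Vball n * r ^ (n + 2) / (n + 2) with hκ
  set B := closedBall (0 : Eu n) r with hB
  have hi1 : IntegrableOn (fun y : Eu n => ‖mApp G y‖ ^ 2) B volume :=
    cont_integrableOn r (((mApp_continuous G).norm).pow 2)
  have hi2 : IntegrableOn (fun y : Eu n => 2 * ⟪mApp G y, v⟫) B volume :=
    cont_integrableOn r (continuous_const.mul ((mApp_continuous G).inner continuous_const))
  have hi3 : IntegrableOn (fun _ : Eu n => ‖v‖ ^ 2) B volume :=
    cont_integrableOn r continuous_const
  have hsplit : ∫ y in B, ‖mApp G y + v‖ ^ 2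
      = (∫ y in B, ‖mApp G y‖ ^ 2) + (∫ y in B, 2 * ⟪mApp G y, v⟫)
        + ∫ _y in B, ‖v‖ ^ 2 :=
    calc ∫ y in B, ‖mApp G y + v‖ ^ 2
        = ∫ y in B, (‖mApp G y‖ ^ 2 + 2 * ⟪mApp G y, v⟫ + ‖v‖ ^ 2) :=
          setIntegral_congr_fun measurableSet_closedBall
            (fun y _ => norm_add_sq_real (mApp G y) v)
      _ = (∫ y in B, (‖mApp G y‖ ^ 2 + 2 * ⟪mApp G y, v⟫)) + ∫ _y in B, ‖v‖ ^ 2 :=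
          integral_add (hi1.add hi2) hi3
      _ = (∫ y in B, ‖mApp G y‖ ^ 2) + (∫ y in B, 2 * ⟪mApp G y, v⟫)
            + ∫ _y in B, ‖v‖ ^ 2 := by rw [integral_add hi1 hi2]
  have hlin : (∫ y in B, 2 * ⟪mApp G y, v⟫) = 0 := by
    have : ∀ y : Eu n, 2 * ⟪mApp G y, v⟫ = 2 * ⟪y, mApp G.transpose v⟫ := fun y => by
      rw [inner_mApp_left]
    simp_rw [this]
    rw [integral_const_mul, integral_inner_ball_zero, mul_zero]
  have hconst : (∫ _y in B, ‖v‖ ^ 2) = Vball n * r ^ n * ‖v‖ ^ 2 := by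
    rw [setIntegral_const, smul_eq_mul, measureReal_def, volume_closedBall_eu 0 hr]
  have hquad : (∫ y in B, ‖mApp G y‖ ^ 2) = κ * frobSq G := by
    have h1 : (∫ y in B, ‖mApp G y‖ ^ 2)
        = ∑ p : Fin n × Fin n × Fin n,
            ∫ y in B, G p.1 p.2.1 * G p.1 p.2.2 * (y p.2.1 * y p.2.2) := by
      rw [← integral_finset_sum]
      · apply setIntegral_congr_fun measurableSet_closedBall
        intro y _
        exact expand_normsq G y
      · intro p _
        exact cont_integrableOn r
          (continuous_const.mul ((coord_continuous p.2.1).mul (coord_continuous p.2.2)))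
    rw [h1]
    have h2 : ∀ p : Fin n × Fin n × Fin n,
        (∫ y in B, G p.1 p.2.1 * G p.1 p.2.2 * (y p.2.1 * y p.2.2))
          = G p.1 p.2.1 * G p.1 p.2.2 * if p.2.1 = p.2.2 then κ else 0 := by
      intro p
      rw [integral_const_mul, moment hr]
    rw [Finset.sum_congr rfl fun p _ => h2 p, Fintype.sum_prod_type]
    have h3 : ∀ i : Fin n, (∑ q : Fin n × Fin n,
        G i q.1 * G i q.2 * if q.1 = q.2 then κ else 0) = ∑ j, G i j ^ 2 * κ := by
      intro i
      rw [Fintype.sum_prod_type]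
      apply Finset.sum_congr rfl
      intro j _
      simp [mul_ite, mul_zero, Finset.sum_ite_eq, pow_two]
    rw [Finset.sum_congr rfl fun i _ => h3 i, frobSq, Finset.mul_sum]
    apply Finset.sum_congr rfl
    intro i _
    rw [Finset.mul_sum]
    exact Finset.sum_congr rfl fun j _ => mul_comm _ _
  rw [hsplit, hlin, hconst, hquad, hκ]
  have hrpow : r ^ (n + 2) = r ^ n * r ^ 2 := pow_add r n 2
  rw [hrpow]
  field_simp
  ring

theorem stmt_4 (n : ℕ) (c : ℝ) (g x₀ : EuclideanSpace ℝ (Fin n))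
    (G : Matrix (Fin n) (Fin n) ℝ) (hG : G.IsSymm) (r : ℝ) (hr : 0 < r)
    (Q : EuclideanSpace ℝ (Fin n) → ℝ)
    (hQ : Q = fun x => c + ⟪g, x⟫ + ⟪x, mApp G x⟫ / 2) :
    ∫ x in closedBall x₀ r, ‖gradient Q x‖ ^ 2 =
      Vball n * r ^ n * (r ^ 2 / (n + 2) * frobSq G + ‖gradient Q x₀‖ ^ 2) := by
  have hgrad : ∀ x, gradient Q x = mApp G x + g := by
    intro x
    rw [hQ]
    exact grad_quad c g G hG x
  have htrans : ∫ x in closedBall x₀ r, ‖gradient Q x‖ ^ 2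
      = ∫ y in closedBall (0 : Eu n) r, ‖gradient Q (x₀ + y)‖ ^ 2 := by
    have hmp : MeasurePreserving (fun y : Eu n => x₀ + y) volume volume :=
      measurePreserving_add_left volume x₀
    have hemb : MeasurableEmbedding (fun y : Eu n => x₀ + y) :=
      (Homeomorph.addLeft x₀).measurableEmbedding
    have h := hmp.setIntegral_preimage_emb hemb
      (fun x => ‖gradient Q x‖ ^ 2) (closedBall x₀ r)
    have hs : (fun y : Eu n => x₀ + y) ⁻¹' closedBall x₀ r = closedBall 0 r := by
      ext y
      simp [mem_closedBall, dist_eq_norm]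
    rw [← h, hs]
  rw [htrans]
  have hpt : ∀ y : Eu n, gradient Q (x₀ + y) = mApp G y + (mApp G x₀ + g) := by
    intro y
    rw [hgrad, mApp, map_add]
    change mApp G x₀ + mApp G y + g = _
    abel
  simp_rw [hpt]
  rw [key_integral G (mApp G x₀ + g) hr, hgrad x₀]
end

section
/- Let S be a finite set in ℝⁿ and f : S → ℝ such that there exists a quadratic function interpolating f on S. For σ > 0, the minimizer of Q ↦ ‖∇²Q‖_F² + σ‖∇Q(x₀)‖₂² over all quadratic functions Q satisfying Q(x) = f(x) for all x ∈ S is unique. -/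
open MeasureTheory Metric Real
open scoped RealInnerProductSpace

noncomputable def objF {n : ℕ} (x₀ : EuclideanSpace ℝ (Fin n)) (σ : ℝ)
    (p : ℝ × EuclideanSpace ℝ (Fin n) × Matrix (Fin n) (Fin n) ℝ) : ℝ :=
  frobSq p.2.2 + σ * ‖mApp p.2.2 x₀ + p.2.1‖ ^ 2

section Aux

variable {n : ℕ}

/-- `quadF p x` as a linear map in `p`. -/
noncomputable def qLin (x : EuclideanSpace ℝ (Fin n)) :
    (ℝ × EuclideanSpace ℝ (Fin n) × Matrix (Fin n) (Fin n) ℝ) →ₗ[ℝ] ℝ where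
  toFun p := quadF p x
  map_add' p q := by
    simp only [quadF, mApp, Prod.fst_add, Prod.snd_add, map_add, LinearMap.add_apply,
      inner_add_left, inner_add_right]
    ring
  map_smul' c p := by
    simp only [quadF, mApp, Prod.smul_fst, Prod.smul_snd, _root_.map_smul,
      LinearMap.smul_apply, inner_smul_left, inner_smul_right, RingHom.id_apply,
      smul_eq_mul, conj_trivial]
    ring

lemma quadF_sub (p q : ℝ × EuclideanSpace ℝ (Fin n) × Matrix (Fin n) (Fin n) ℝ)
    (x : EuclideanSpace ℝ (Fin n)) : quadF (p - q) x = quadF p x - quadF q x :=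
  map_sub (qLin x) p q

/-- The subspace of feasible directions. -/
noncomputable def Vsub (S : Finset (EuclideanSpace ℝ (Fin n))) :
    Submodule ℝ (ℝ × EuclideanSpace ℝ (Fin n) × Matrix (Fin n) (Fin n) ℝ) where
  carrier := {v | v.2.2.IsSymm ∧ ∀ x ∈ S, quadF v x = 0}
  add_mem' := by
    rintro a b ⟨ha1, ha2⟩ ⟨hb1, hb2⟩
    refine ⟨ha1.add hb1, fun x hx => ?_⟩
    · have := map_add (qLin x) a b
      simp only [qLin, LinearMap.coe_mk, AddHom.coe_mk] at this
      rw [this, ha2 x hx, hb2 x hx, add_zero]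
  zero_mem' := by
    exact ⟨Matrix.isSymm_zero, fun x hx => map_zero (qLin x)⟩
  smul_mem' := by
    rintro c a ⟨ha1, ha2⟩
    refine ⟨ha1.smul c, fun x hx => ?_⟩
    · have := _root_.map_smul (qLin x) c a
      simp only [qLin, LinearMap.coe_mk, AddHom.coe_mk, smul_eq_mul] at this
      rw [this, ha2 x hx, mul_zero]

/-- Linear map collecting the data whose norm-squared is the objective. -/
noncomputable def Tmap (x₀ : EuclideanSpace ℝ (Fin n)) (σ : ℝ) :
    (ℝ × EuclideanSpace ℝ (Fin n) × Matrix (Fin n) (Fin n) ℝ) →ₗ[ℝ]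
      EuclideanSpace ℝ ((Fin n × Fin n) ⊕ Fin n) where
  toFun p := WithLp.toLp 2 (fun s => Sum.elim (fun ij : Fin n × Fin n => p.2.2 ij.1 ij.2)
      (fun i => Real.sqrt σ * (mApp p.2.2 x₀ + p.2.1) i) s)
  map_add' p q := by
    ext s
    rcases s with ij | i
    · simp [Matrix.add_apply]
    · simp only [mApp, Prod.fst_add, Prod.snd_add, map_add, LinearMap.add_apply,
        Sum.elim_inr, PiLp.add_apply, PiLp.toLp_apply]
      ring
  map_smul' c p := by
    ext s
    rcases s with ij | i
    · simp [Matrix.smul_apply, smul_eq_mul]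
    · simp only [mApp, Prod.smul_fst, Prod.smul_snd, _root_.map_smul, LinearMap.smul_apply,
        Sum.elim_inr, RingHom.id_apply, PiLp.add_apply, PiLp.smul_apply, smul_eq_mul,
        PiLp.toLp_apply]
      ring

lemma norm_sq_euclid {ι : Type*} [Fintype ι] (y : EuclideanSpace ℝ ι) :
    ‖y‖ ^ 2 = ∑ i, y i ^ 2 := by
  exact EuclideanSpace.real_norm_sq_eq y

lemma objF_eq_norm_sq (x₀ : EuclideanSpace ℝ (Fin n)) {σ : ℝ} (hσ : 0 ≤ σ)
    (p : ℝ × EuclideanSpace ℝ (Fin n) × Matrix (Fin n) (Fin n) ℝ) :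
    objF x₀ σ p = ‖Tmap x₀ σ p‖ ^ 2 := by
  rw [norm_sq_euclid, objF, frobSq, norm_sq_euclid]
  rw [Fintype.sum_sum_type]
  simp only [Tmap, LinearMap.coe_mk, AddHom.coe_mk, Sum.elim_inl, Sum.elim_inr]
  rw [Fintype.sum_prod_type, Finset.mul_sum]
  congr 1
  refine Finset.sum_congr rfl fun i _ => ?_
  rw [mul_pow, Real.sq_sqrt hσ]

lemma Tmap_injOn_V {S : Finset (EuclideanSpace ℝ (Fin n))} (hS : S.Nonempty)
    (x₀ : EuclideanSpace ℝ (Fin n)) {σ : ℝ} (hσ : 0 < σ)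
    {v : ℝ × EuclideanSpace ℝ (Fin n) × Matrix (Fin n) (Fin n) ℝ}
    (hv : v ∈ Vsub S) (h0 : Tmap x₀ σ v = 0) : v = 0 := by
  have hG : v.2.2 = 0 := by
    ext i j
    have := congrArg (fun w => w (Sum.inl (i, j))) h0
    simpa [Tmap] using this
  have hg : v.2.1 = 0 := by
    ext i
    have := congrArg (fun w => w (Sum.inr i)) h0
    simp only [Tmap, LinearMap.coe_mk, AddHom.coe_mk, Sum.elim_inr, PiLp.toLp_apply] at this
    have hs : Real.sqrt σ ≠ 0 := by positivity
    have h2 : (mApp v.2.2 x₀ + v.2.1) i = 0 := by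
      have := mul_eq_zero.mp this
      tauto
    rw [hG] at h2
    have : mApp (0 : Matrix (Fin n) (Fin n) ℝ) x₀ = 0 := by
      simp [mApp]
    rw [this, zero_add] at h2
    simpa using h2
  have hv' : v.2.2.IsSymm ∧ ∀ x ∈ S, quadF v x = 0 := hv
  have hc : v.1 = 0 := by
    obtain ⟨x, hx⟩ := hS
    have := hv'.2 x hx
    rw [quadF, hg, hG] at this
    have hz : mApp (0 : Matrix (Fin n) (Fin n) ℝ) x = 0 := by simp [mApp]
    simpa [hz] using this
  have : v = (v.1, v.2.1, v.2.2) := rfl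
  rw [this, hc, hg, hG]
  rfl

end Aux

theorem stmt_8 (n : ℕ) (S : Finset (EuclideanSpace ℝ (Fin n))) (hS : S.Nonempty)
    (f : EuclideanSpace ℝ (Fin n) → ℝ) (x₀ : EuclideanSpace ℝ (Fin n)) (σ : ℝ) (hσ : 0 < σ)
    (hcons : ∃ p : ℝ × EuclideanSpace ℝ (Fin n) × Matrix (Fin n) (Fin n) ℝ,
      p.2.2.IsSymm ∧ ∀ x ∈ S, quadF p x = f x) :
    ∃! p : ℝ × EuclideanSpace ℝ (Fin n) × Matrix (Fin n) (Fin n) ℝ,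
      p.2.2.IsSymm ∧ (∀ x ∈ S, quadF p x = f x) ∧
        ∀ q : ℝ × EuclideanSpace ℝ (Fin n) × Matrix (Fin n) (Fin n) ℝ,
          q.2.2.IsSymm → (∀ x ∈ S, quadF q x = f x) → objF x₀ σ p ≤ objF x₀ σ q := by
  obtain ⟨p₀, hp₀sym, hp₀⟩ := hcons
  set T := Tmap (n := n) x₀ σ with hT
  set W : Submodule ℝ (EuclideanSpace ℝ ((Fin n × Fin n) ⊕ Fin n)) := (Vsub S).map T with hW
  -- feasibility of q iff q - p₀ ∈ Vsub S
  have hfeas : ∀ q : ℝ × EuclideanSpace ℝ (Fin n) × Matrix (Fin n) (Fin n) ℝ,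
      (q.2.2.IsSymm ∧ ∀ x ∈ S, quadF q x = f x) ↔ q - p₀ ∈ Vsub S := by
    intro q
    constructor
    · rintro ⟨h1, h2⟩
      refine ⟨h1.sub hp₀sym, fun x hx => ?_⟩
      · rw [quadF_sub, h2 x hx, hp₀ x hx, sub_self]
    · rintro hqm
      have hq' : (q - p₀).2.2.IsSymm ∧ ∀ x ∈ S, quadF (q - p₀) x = 0 := hqm
      obtain ⟨h1, h2⟩ := hq'
      constructor
      · have : q.2.2 = (q.2.2 - p₀.2.2) + p₀.2.2 := by abel
        rw [this]
        exact Matrix.IsSymm.add h1 hp₀sym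
      · intro x hx
        have := h2 x hx
        rw [quadF_sub, hp₀ x hx, sub_eq_zero] at this
        exact this
  set u := T p₀ with hu
  set prj : EuclideanSpace ℝ ((Fin n × Fin n) ⊕ Fin n) :=
    (W.orthogonalProjectionOnto (-u) : EuclideanSpace ℝ ((Fin n × Fin n) ⊕ Fin n)) with hprj
  have hprjW : prj ∈ W := Submodule.coe_mem _
  -- key inequality / equality characterization
  have hkey : ∀ w ∈ W, ‖-u - prj‖ ^ 2 + ‖prj - w‖ ^ 2 = ‖-u - w‖ ^ 2 := by
    intro w hw
    have horth : ⟪-u - prj, prj - w⟫ = 0 :=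
      W.starProjection_inner_eq_zero (-u) (prj - w) (Submodule.sub_mem W hprjW hw)
    have hdec : -u - w = (-u - prj) + (prj - w) := by abel
    rw [hdec, norm_add_sq_real, horth]
    ring
  -- pick the minimizer
  obtain ⟨v, hvV, hvT⟩ : ∃ v ∈ Vsub S, T v = prj := by
    obtain ⟨v, hv1, hv2⟩ := hprjW
    exact ⟨v, hv1, hv2⟩
  set p := p₀ + v with hp
  have hpV : p - p₀ ∈ Vsub S := by
    have : p - p₀ = v := by rw [hp]; abel
    rw [this]; exact hvV
  have hpfeas := (hfeas p).mpr hpV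
  have hTp : T p = -(-u - prj) := by
    rw [hp, map_add, hvT, hu]
    abel
  have hobjq : ∀ q, (q.2.2.IsSymm ∧ ∀ x ∈ S, quadF q x = f x) →
      objF x₀ σ q = ‖-u - T (q - p₀)‖ ^ 2 ∧ T (q - p₀) ∈ W := by
    intro q hq
    have hqV := (hfeas q).mp hq
    constructor
    · rw [objF_eq_norm_sq x₀ hσ.le]
      have : T q = -(-u - T (q - p₀)) := by
        rw [map_sub, hu]; abel
      rw [← hT, this, norm_neg]
    · exact ⟨q - p₀, hqV, rfl⟩
  have hobjp : objF x₀ σ p = ‖-u - prj‖ ^ 2 := by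
    rw [objF_eq_norm_sq x₀ hσ.le, ← hT, hTp, norm_neg]
  have hmin : ∀ q : ℝ × EuclideanSpace ℝ (Fin n) × Matrix (Fin n) (Fin n) ℝ,
      q.2.2.IsSymm → (∀ x ∈ S, quadF q x = f x) → objF x₀ σ p ≤ objF x₀ σ q := by
    intro q hq1 hq2
    obtain ⟨heq, hmem⟩ := hobjq q ⟨hq1, hq2⟩
    rw [hobjp, heq, ← hkey _ hmem]
    nlinarith [sq_nonneg ‖prj - T (q - p₀)‖]
  refine ⟨p, ⟨hpfeas.1, hpfeas.2, hmin⟩, ?_⟩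
  rintro q ⟨hq1, hq2, hqmin⟩
  -- q is also a minimizer, hence objF q = objF p
  have hle1 := hqmin p hpfeas.1 hpfeas.2
  have hle2 := hmin q hq1 hq2
  have heqobj : objF x₀ σ q = objF x₀ σ p := le_antisymm hle1 hle2
  obtain ⟨heq, hmem⟩ := hobjq q ⟨hq1, hq2⟩
  have hzero : ‖prj - T (q - p₀)‖ ^ 2 = 0 := by
    have := hkey _ hmem
    rw [← heq, heqobj, hobjp] at this
    linarith
  have hTq : T (q - p₀) = prj := by
    have : prj - T (q - p₀) = 0 := norm_eq_zero.mp (sq_eq_zero_iff.mp hzero)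
    rw [sub_eq_zero] at this
    exact this.symm
  have hdiff : q - p ∈ Vsub S := by
    have : q - p = (q - p₀) - (p - p₀) := by abel
    rw [this]
    exact Submodule.sub_mem _ ((hfeas q).mp ⟨hq1, hq2⟩) hpV
  have hTdiff : T (q - p) = 0 := by
    have hTpd : T (p - p₀) = prj := by
      have : p - p₀ = v := by rw [hp]; abel
      rw [this, hvT]
    have : q - p = (q - p₀) - (p - p₀) := by abel
    rw [this, map_sub, hTq, hTpd, sub_self]
  have := Tmap_injOn_V hS x₀ hσ hdiff hTdiff
  have : q - p = 0 := this
  exact sub_eq_zero.mp this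
end

section
/- Under the hypotheses of the preceding statement (F quadratic, Q₊ the H¹(B)-least-change interpolant of F on S from Q₀), it holds that ∫_B ‖∇Q₊(x) − ∇F(x)‖₂² dx ≤ ∫_B ‖∇Q₀(x) − ∇F(x)‖₂² dx, with equality if and only if ∇Q₊ = ∇Q₀ on B. -/
open MeasureTheory Metric Real
open scoped RealInnerProductSpace

/-- `gradF` is continuous in `x`. -/
lemma gradF_continuous {n : ℕ} (p : ℝ × EuclideanSpace ℝ (Fin n) × Matrix (Fin n) (Fin n) ℝ) :
    Continuous (gradF p) := by
  unfold gradF mApp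
  exact ((Matrix.toEuclideanLin p.2.2).continuous_of_finiteDimensional).add continuous_const

/-- Linearity of `quadF` along a segment in parameter space. -/
lemma quadF_segment {n : ℕ} (pp pF : ℝ × EuclideanSpace ℝ (Fin n) × Matrix (Fin n) (Fin n) ℝ)
    (t : ℝ) (x : EuclideanSpace ℝ (Fin n)) :
    quadF (pp.1 + t * (pF.1 - pp.1), pp.2.1 + t • (pF.2.1 - pp.2.1),
      pp.2.2 + t • (pF.2.2 - pp.2.2)) x = quadF pp x + t * (quadF pF x - quadF pp x) := by
  simp only [quadF, mApp, map_add, _root_.map_smul, map_sub, LinearMap.add_apply,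
    LinearMap.smul_apply, LinearMap.sub_apply, inner_add_left, inner_add_right,
    inner_sub_left, inner_sub_right, real_inner_smul_left, real_inner_smul_right]
  ring

/-- Linearity of `gradF` along a segment in parameter space. -/
lemma gradF_segment {n : ℕ} (pp pF : ℝ × EuclideanSpace ℝ (Fin n) × Matrix (Fin n) (Fin n) ℝ)
    (t : ℝ) (x : EuclideanSpace ℝ (Fin n)) :
    gradF (pp.1 + t * (pF.1 - pp.1), pp.2.1 + t • (pF.2.1 - pp.2.1),
      pp.2.2 + t • (pF.2.2 - pp.2.2)) x = gradF pp x + t • (gradF pF x - gradF pp x) := by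
  simp only [gradF, mApp, map_add, _root_.map_smul, map_sub, LinearMap.add_apply,
    LinearMap.smul_apply, LinearMap.sub_apply, smul_sub, smul_add]
  abel

lemma bzero_of_quadratic {B C : ℝ} (hC : 0 ≤ C) (h : ∀ t : ℝ, 0 ≤ -(2 * t * B) + t ^ 2 * C) :
    B = 0 := by
  by_contra hB
  have hd : (0:ℝ) < C + 1 := by linarith
  have h1 := h (B / (C + 1))
  have hB2 : 0 < B ^ 2 := by positivity
  rw [div_pow] at h1
  have h2 : 0 ≤ (-(2 * (B / (C + 1)) * B) + B ^ 2 / (C + 1) ^ 2 * C) * (C + 1) ^ 2 :=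
    mul_nonneg h1 (by positivity)
  have h3 : (-(2 * (B / (C + 1)) * B) + B ^ 2 / (C + 1) ^ 2 * C) * (C + 1) ^ 2
      = -(2 * B ^ 2 * (C + 1)) + B ^ 2 * C := by
    field_simp
  rw [h3] at h2
  nlinarith

/-- A continuous nonnegative function with zero integral over a closed ball
vanishes on the closed ball. -/
lemma zero_on_closedBall {n : ℕ} (f : EuclideanSpace ℝ (Fin n) → ℝ) (hc : Continuous f)
    (hnn : ∀ x, 0 ≤ f x) (x₀ : EuclideanSpace ℝ (Fin n)) {r : ℝ} (hr : 0 < r)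
    (h0 : (∫ x in closedBall x₀ r, f x) = 0) :
    ∀ x ∈ closedBall x₀ r, f x = 0 := by
  have hK : IsCompact (closedBall x₀ r) := isCompact_closedBall _ _
  have hint : IntegrableOn f (closedBall x₀ r) :=
    hc.continuousOn.integrableOn_compact hK
  have hae : f =ᵐ[volume.restrict (closedBall x₀ r)] 0 :=
    (setIntegral_eq_zero_iff_of_nonneg_ae (Filter.Eventually.of_forall fun x => hnn x)
      hint).mp h0
  have hae' : ∀ᵐ z ∂(volume : Measure (EuclideanSpace ℝ (Fin n))),
      z ∈ closedBall x₀ r → f z = 0 := by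
    rw [← ae_restrict_iff' measurableSet_closedBall]
    exact hae
  have hball : Set.EqOn f 0 (ball x₀ r) := by
    intro y hy
    by_contra hne
    have hpos : 0 < f y := lt_of_le_of_ne (hnn y) (Ne.symm hne)
    set U : Set (EuclideanSpace ℝ (Fin n)) := f ⁻¹' Set.Ioi (f y / 2) ∩ ball x₀ r with hU
    have hUopen : IsOpen U := (isOpen_Ioi.preimage hc).inter isOpen_ball
    have hyU : y ∈ U := ⟨by simpa using by linarith, hy⟩
    have hUpos : 0 < volume U := hUopen.measure_pos volume ⟨y, hyU⟩
    have hnull : volume {z | ¬ (z ∈ closedBall x₀ r → f z = 0)} = 0 := ae_iff.mp hae'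
    have hUnull : volume U = 0 := by
      refine measure_mono_null ?_ hnull
      intro z hz
      simp only [Set.mem_setOf_eq, Classical.not_imp]
      refine ⟨ball_subset_closedBall hz.2, ?_⟩
      have hzlt : f y / 2 < f z := hz.1
      intro h; rw [h] at hzlt; linarith
    exact absurd hUnull hUpos.ne'
  have hcl : Set.EqOn f 0 (closure (ball x₀ r)) :=
    hball.closure hc continuous_const
  rw [closure_ball x₀ hr.ne'] at hcl
  intro x hx
  exact hcl hx

theorem stmt_11 (n : ℕ) (S : Finset (EuclideanSpace ℝ (Fin n))) (hS : S.Nonempty)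
    (x₀ : EuclideanSpace ℝ (Fin n)) (r : ℝ) (hr : 0 < r)
    (pF p0 pp : ℝ × EuclideanSpace ℝ (Fin n) × Matrix (Fin n) (Fin n) ℝ)
    (hFs : pF.2.2.IsSymm) (h0s : p0.2.2.IsSymm) (hps : pp.2.2.IsSymm)
    (hfeas : ∀ x ∈ S, quadF pp x = quadF pF x)
    (hmin : ∀ q : ℝ × EuclideanSpace ℝ (Fin n) × Matrix (Fin n) (Fin n) ℝ,
      q.2.2.IsSymm → (∀ x ∈ S, quadF q x = quadF pF x) →
      (∫ x in closedBall x₀ r, ‖gradF pp x - gradF p0 x‖ ^ 2) ≤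
        ∫ x in closedBall x₀ r, ‖gradF q x - gradF p0 x‖ ^ 2) :
    (∫ x in closedBall x₀ r, ‖gradF pp x - gradF pF x‖ ^ 2) ≤
      (∫ x in closedBall x₀ r, ‖gradF p0 x - gradF pF x‖ ^ 2) ∧
    ((∫ x in closedBall x₀ r, ‖gradF pp x - gradF pF x‖ ^ 2) =
        (∫ x in closedBall x₀ r, ‖gradF p0 x - gradF pF x‖ ^ 2) ↔
      ∀ x ∈ closedBall x₀ r, gradF pp x = gradF p0 x) := by
  classical
  set K := closedBall x₀ r with hKdef
  have hK : IsCompact K := isCompact_closedBall _ _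
  set u : EuclideanSpace ℝ (Fin n) → EuclideanSpace ℝ (Fin n) :=
    fun x => gradF pp x - gradF p0 x with hu
  set w : EuclideanSpace ℝ (Fin n) → EuclideanSpace ℝ (Fin n) :=
    fun x => gradF pp x - gradF pF x with hw
  have cu : Continuous u := (gradF_continuous pp).sub (gradF_continuous p0)
  have cw : Continuous w := (gradF_continuous pp).sub (gradF_continuous pF)
  have iu : IntegrableOn (fun x => ‖u x‖ ^ 2) K :=
    ((cu.norm.pow 2)).continuousOn.integrableOn_compact hK
  have iw : IntegrableOn (fun x => ‖w x‖ ^ 2) K :=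
    ((cw.norm.pow 2)).continuousOn.integrableOn_compact hK
  have iuw : IntegrableOn (fun x => ⟪u x, w x⟫) K :=
    (cu.inner cw).continuousOn.integrableOn_compact hK
  set A : ℝ := ∫ x in K, ‖u x‖ ^ 2 with hA
  set W : ℝ := ∫ x in K, ‖w x‖ ^ 2 with hW
  set B : ℝ := ∫ x in K, ⟪u x, w x⟫ with hB
  have hCnn : 0 ≤ W := setIntegral_nonneg measurableSet_closedBall fun x _ => by positivity
  have hAnn : 0 ≤ A := setIntegral_nonneg measurableSet_closedBall fun x _ => by positivity
  -- orthogonality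
  have hBzero : B = 0 := by
    refine bzero_of_quadratic hCnn fun t => ?_
    set q : ℝ × EuclideanSpace ℝ (Fin n) × Matrix (Fin n) (Fin n) ℝ :=
      (pp.1 + t * (pF.1 - pp.1), pp.2.1 + t • (pF.2.1 - pp.2.1),
        pp.2.2 + t • (pF.2.2 - pp.2.2)) with hq
    have hqs : q.2.2.IsSymm := by
      simp only [hq, Matrix.IsSymm, Matrix.transpose_add, Matrix.transpose_smul,
        Matrix.transpose_sub, hps.eq, hFs.eq]
    have hqf : ∀ x ∈ S, quadF q x = quadF pF x := by
      intro x hx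
      rw [hq, quadF_segment, hfeas x hx]
      ring
    have hrun := hmin q hqs hqf
    have hptw : ∀ x : EuclideanSpace ℝ (Fin n),
        ‖gradF q x - gradF p0 x‖ ^ 2
          = ‖u x‖ ^ 2 + (-(2 * t * ⟪u x, w x⟫) + t ^ 2 * ‖w x‖ ^ 2) := by
      intro x
      have h1 : gradF q x - gradF p0 x = u x - t • w x := by
        rw [hq, gradF_segment]
        simp only [hu, hw, smul_sub]
        abel
      rw [h1, norm_sub_sq_real, real_inner_smul_right, norm_smul]
      simp only [Real.norm_eq_abs, mul_pow, sq_abs]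
      ring
    have hint2 : (∫ x in K, ‖gradF q x - gradF p0 x‖ ^ 2)
        = A + (-(2 * t * B) + t ^ 2 * W) := by
      calc (∫ x in K, ‖gradF q x - gradF p0 x‖ ^ 2)
          = ∫ x in K, (‖u x‖ ^ 2 + (-(2 * t * ⟪u x, w x⟫) + t ^ 2 * ‖w x‖ ^ 2)) :=
            integral_congr_ae (Filter.Eventually.of_forall fun x => hptw x)
        _ = A + (-(2 * t * B) + t ^ 2 * W) := by
            have i3 : IntegrableOn (fun x => -(2 * t * ⟪u x, w x⟫)) K :=
              (iuw.const_mul (2 * t)).neg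
            have i4 : IntegrableOn (fun x => t ^ 2 * ‖w x‖ ^ 2) K := iw.const_mul (t ^ 2)
            have i2 : IntegrableOn
                (fun x => -(2 * t * ⟪u x, w x⟫) + t ^ 2 * ‖w x‖ ^ 2) K := i3.add i4
            rw [integral_add iu i2, integral_add i3 i4, integral_neg, integral_const_mul,
              integral_const_mul]
    have := hrun.trans_eq hint2
    -- this : ∫ ‖u‖² ≤ A + ...
    have hAle : A ≤ A + (-(2 * t * B) + t ^ 2 * W) := this
    linarith
  -- Pythagoras
  have hptw2 : ∀ x : EuclideanSpace ℝ (Fin n),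
      ‖gradF p0 x - gradF pF x‖ ^ 2
        = ‖w x‖ ^ 2 + (-(2 * ⟪u x, w x⟫) + ‖u x‖ ^ 2) := by
    intro x
    have h1 : gradF p0 x - gradF pF x = w x - u x := by
      simp only [hu, hw]; abel
    rw [h1, norm_sub_sq_real, real_inner_comm]
    ring
  have hRHS : (∫ x in K, ‖gradF p0 x - gradF pF x‖ ^ 2) = W + A := by
    calc (∫ x in K, ‖gradF p0 x - gradF pF x‖ ^ 2)
        = ∫ x in K, (‖w x‖ ^ 2 + (-(2 * ⟪u x, w x⟫) + ‖u x‖ ^ 2)) :=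
          integral_congr_ae (Filter.Eventually.of_forall fun x => hptw2 x)
      _ = W + (-(2 * B) + A) := by
          have i3 : IntegrableOn (fun x => -(2 * ⟪u x, w x⟫)) K := (iuw.const_mul 2).neg
          have i2 : IntegrableOn (fun x => -(2 * ⟪u x, w x⟫) + ‖u x‖ ^ 2) K := i3.add iu
          rw [integral_add iw i2, integral_add i3 iu, integral_neg, integral_const_mul]
      _ = W + A := by rw [hBzero]; ring
  rw [hRHS]
  refine ⟨by linarith, ?_⟩
  constructor
  · intro hEq
    have hA0 : A = 0 := by linarith
    have hz := zero_on_closedBall (fun x => ‖u x‖ ^ 2) (cu.norm.pow 2)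
      (fun x => by positivity) x₀ hr
      (by rw [show closedBall x₀ r = K from hKdef.symm, ← hA]; exact hA0)
    intro x hx
    have h2 : ‖u x‖ ^ 2 = 0 := hz x hx
    have hux : u x = 0 :=
      norm_eq_zero.mp ((pow_eq_zero_iff two_ne_zero).mp h2)
    have : gradF pp x - gradF p0 x = 0 := hux
    exact sub_eq_zero.mp this
  · intro hEq
    have hA0 : A = 0 := by
      rw [hA]
      rw [setIntegral_congr_fun measurableSet_closedBall
        (fun x hx => by
          show ‖u x‖ ^ 2 = (0 : ℝ)
          have : u x = 0 := by
            simp only [hu]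
            rw [hEq x hx, sub_self]
          rw [this]; simp)]
      simp
    rw [hA0, add_zero]
end

section
/- If F is a quadratic function and Q₊ solves min ‖∇²Q − ∇²Q₀‖_F² + σ‖∇Q(x₀) − ∇Q₀(x₀)‖₂² subject to Q(x) = F(x) for x ∈ S (with σ > 0), then ‖∇²Q₊ − ∇²F‖_F² + σ‖∇Q₊(x₀) − ∇F(x₀)‖₂² = ‖∇²Q₀ − ∇²F‖_F² + σ‖∇Q₀(x₀) − ∇F(x₀)‖₂² − ‖∇²Q₊ − ∇²Q₀‖_F² − σ‖∇Q₊(x₀) − ∇Q₀(x₀)‖₂². -/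
open MeasureTheory Metric Real
open scoped RealInnerProductSpace

noncomputable def objD {n : ℕ} (x₀ : EuclideanSpace ℝ (Fin n)) (σ : ℝ)
    (p q : ℝ × EuclideanSpace ℝ (Fin n) × Matrix (Fin n) (Fin n) ℝ) : ℝ :=
  frobSq (p.2.2 - q.2.2) + σ * ‖mApp (p.2.2 - q.2.2) x₀ + (p.2.1 - q.2.1)‖ ^ 2

lemma mApp_add_smul {n : ℕ} (A B : Matrix (Fin n) (Fin n) ℝ) (t : ℝ)
    (x : EuclideanSpace ℝ (Fin n)) : mApp (A + t • B) x = mApp A x + t • mApp B x := by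
  simp [mApp]

lemma mApp_sub {n : ℕ} (A B : Matrix (Fin n) (Fin n) ℝ) (x : EuclideanSpace ℝ (Fin n)) :
    mApp (A - B) x = mApp A x - mApp B x := by
  simp [mApp]

lemma mApp_neg {n : ℕ} (A : Matrix (Fin n) (Fin n) ℝ) (x : EuclideanSpace ℝ (Fin n)) :
    mApp (-A) x = -(mApp A x) := by
  simp [mApp]

lemma frobSq_neg {n : ℕ} (A : Matrix (Fin n) (Fin n) ℝ) : frobSq (-A) = frobSq A := by
  simp [frobSq]

lemma frobSq_add_smul {n : ℕ} (A B : Matrix (Fin n) (Fin n) ℝ) (t : ℝ) :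
    frobSq (A + t • B) =
      frobSq A + t * (2 * ∑ i, ∑ j, A i j * B i j) + t ^ 2 * frobSq B := by
  simp only [frobSq, Matrix.add_apply, Matrix.smul_apply, smul_eq_mul, Finset.mul_sum]
  rw [← Finset.sum_add_distrib, ← Finset.sum_add_distrib]
  refine Finset.sum_congr rfl fun i _ => ?_
  rw [← Finset.sum_add_distrib, ← Finset.sum_add_distrib]
  exact Finset.sum_congr rfl fun j _ => by ring

lemma norm_add_smul_sq {n : ℕ} (u w : EuclideanSpace ℝ (Fin n)) (t : ℝ) :
    ‖u + t • w‖ ^ 2 = ‖u‖ ^ 2 + t * (2 * ⟪u, w⟫) + t ^ 2 * ‖w‖ ^ 2 := by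
  rw [norm_add_sq_real, real_inner_smul_right, norm_smul]
  rw [mul_pow, Real.norm_eq_abs, sq_abs]
  ring

theorem stmt_12 (n : ℕ) (S : Finset (EuclideanSpace ℝ (Fin n))) (hS : S.Nonempty)
    (x₀ : EuclideanSpace ℝ (Fin n)) (σ : ℝ) (hσ : 0 < σ)
    (pF p0 pp : ℝ × EuclideanSpace ℝ (Fin n) × Matrix (Fin n) (Fin n) ℝ)
    (hFs : pF.2.2.IsSymm) (h0s : p0.2.2.IsSymm) (hps : pp.2.2.IsSymm)
    (hfeas : ∀ x ∈ S, quadF pp x = quadF pF x)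
    (hmin : ∀ q : ℝ × EuclideanSpace ℝ (Fin n) × Matrix (Fin n) (Fin n) ℝ,
      q.2.2.IsSymm → (∀ x ∈ S, quadF q x = quadF pF x) →
      objD x₀ σ pp p0 ≤ objD x₀ σ q p0) :
    objD x₀ σ pp pF = objD x₀ σ p0 pF - objD x₀ σ pp p0 := by
  classical
  obtain ⟨Dg, hDg⟩ : ∃ Dg, Dg = pp.2.2 - p0.2.2 := ⟨_, rfl⟩
  obtain ⟨Eg, hEg⟩ : ∃ Eg, Eg = pF.2.2 - pp.2.2 := ⟨_, rfl⟩
  obtain ⟨u, hu⟩ : ∃ u, u = mApp Dg x₀ + (pp.2.1 - p0.2.1) := ⟨_, rfl⟩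
  obtain ⟨w, hw⟩ : ∃ w, w = mApp Eg x₀ + (pF.2.1 - pp.2.1) := ⟨_, rfl⟩
  obtain ⟨Sdot, hSdot⟩ : ∃ s : ℝ, s = ∑ i, ∑ j, Dg i j * Eg i j := ⟨_, rfl⟩
  obtain ⟨b, hb⟩ : ∃ b : ℝ, b = 2 * Sdot + σ * (2 * ⟪u, w⟫) := ⟨_, rfl⟩
  obtain ⟨c, hc⟩ : ∃ c : ℝ, c = frobSq Eg + σ * ‖w‖ ^ 2 := ⟨_, rfl⟩
  have key : ∀ t : ℝ, 0 ≤ t * b + t ^ 2 * c := by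
    intro t
    set q : ℝ × EuclideanSpace ℝ (Fin n) × Matrix (Fin n) (Fin n) ℝ :=
      (pp.1 + t * (pF.1 - pp.1), pp.2.1 + t • (pF.2.1 - pp.2.1),
        pp.2.2 + t • (pF.2.2 - pp.2.2)) with hq
    have hsymm : q.2.2.IsSymm := hps.add ((hFs.sub hps).smul t)
    have hfq : ∀ x ∈ S, quadF q x = quadF pF x := by
      intro x hx
      have h1 : quadF q x = quadF pp x + t * (quadF pF x - quadF pp x) := by
        simp only [quadF, hq, mApp_add_smul, mApp_sub, inner_add_left, inner_add_right,
          inner_sub_left, inner_sub_right, real_inner_smul_left, real_inner_smul_right]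
        ring
      rw [h1, hfeas x hx]; ring
    have hle := hmin q hsymm hfq
    have hG : q.2.2 - p0.2.2 = Dg + t • Eg := by
      simp only [hq, hDg, hEg]; abel
    have hv : mApp (Dg + t • Eg) x₀ + (q.2.1 - p0.2.1) = u + t • w := by
      rw [mApp_add_smul, hu, hw]
      simp only [hq, smul_add]
      abel
    have hobj : objD x₀ σ q p0 = objD x₀ σ pp p0 + (t * b + t ^ 2 * c) := by
      simp only [objD]
      rw [hG, hv, frobSq_add_smul, norm_add_smul_sq, hb, hc, hSdot, hu, hw, hDg, hEg]
      ring
    rw [hobj] at hle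
    linarith
  have hc0 : 0 ≤ c := by
    have h1 : 0 ≤ frobSq Eg := Finset.sum_nonneg fun i _ =>
      Finset.sum_nonneg fun j _ => sq_nonneg _
    have h2 : 0 ≤ σ * ‖w‖ ^ 2 := mul_nonneg hσ.le (sq_nonneg _)
    rw [hc]; linarith
  have hb0 : b = 0 := by
    have h := key (-b / (c + 1))
    have hc1 : 0 < c + 1 := by linarith
    have hpos : (0:ℝ) < (c + 1) ^ 2 := by positivity
    have heq : (-b / (c + 1)) * b + (-b / (c + 1)) ^ 2 * c = -(b ^ 2) / (c + 1) ^ 2 := by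
      field_simp
      ring
    rw [heq] at h
    have h3 : -(b ^ 2) / (c + 1) ^ 2 * (c + 1) ^ 2 = -(b ^ 2) := by
      field_simp
    have h4 : 0 ≤ -(b ^ 2) := h3 ▸ mul_nonneg h hpos.le
    have h5 : b ^ 2 = 0 := le_antisymm (by linarith) (sq_nonneg b)
    exact pow_eq_zero_iff (by norm_num) |>.mp h5
  have e1 : objD x₀ σ pp pF = frobSq Eg + σ * ‖w‖ ^ 2 := by
    have h1 : pp.2.2 - pF.2.2 = -Eg := by rw [hEg]; abel
    have h2 : mApp (-Eg) x₀ + (pp.2.1 - pF.2.1) = -w := by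
      rw [mApp_neg, hw]; abel
    simp only [objD]
    rw [h1, h2, frobSq_neg, norm_neg]
  have e2 : objD x₀ σ p0 pF = frobSq (Dg + (1:ℝ) • Eg) + σ * ‖u + (1:ℝ) • w‖ ^ 2 := by
    have h1 : p0.2.2 - pF.2.2 = -(Dg + (1:ℝ) • Eg) := by
      rw [hDg, hEg, one_smul]; abel
    have h2 : mApp (-(Dg + (1:ℝ) • Eg)) x₀ + (p0.2.1 - pF.2.1) = -(u + (1:ℝ) • w) := by
      have : mApp (-(Dg + (1:ℝ) • Eg)) x₀ = -(mApp Dg x₀ + (1:ℝ) • mApp Eg x₀) := by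
        rw [mApp_neg, mApp_add_smul]
      rw [this, hu, hw]
      simp only [one_smul]
      abel
    simp only [objD]
    rw [h1, h2, frobSq_neg, norm_neg]
  have e3 : objD x₀ σ pp p0 = frobSq Dg + σ * ‖u‖ ^ 2 := by
    simp only [objD]
    rw [← hDg, ← hu]
  have hb' : 2 * Sdot + σ * (2 * ⟪u, w⟫) = 0 := hb ▸ hb0
  rw [e1, e2, e3, frobSq_add_smul, norm_add_smul_sq, ← hSdot]
  nlinarith [hb']
end

section
/- Let S be a finite set in ℝⁿ for which the interpolation system Q(x) = f(x), x ∈ S, is consistent on the quadratics. For σ ≥ 0 let Q_σ denote the unique solution of the least-norm interpolation problem (for σ = 0 defined as the bilevel problem: among interpolants with minimal ‖∇²Q‖_F, minimize ‖∇Q(x₀)‖₂). Then as σ → 0⁺, the coefficients of Q_σ converge to those of Q₀. -/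
set_option maxHeartbeats 1000000


open MeasureTheory Metric Real
open scoped RealInnerProductSpace

noncomputable def midQ {n : ℕ} (p q : ℝ × EuclideanSpace ℝ (Fin n) × Matrix (Fin n) (Fin n) ℝ) :
    ℝ × EuclideanSpace ℝ (Fin n) × Matrix (Fin n) (Fin n) ℝ :=
  ((p.1 + q.1) / 2, (2⁻¹ : ℝ) • (p.2.1 + q.2.1), (2⁻¹ : ℝ) • (p.2.2 + q.2.2))

lemma frobSq_nonneg {n : ℕ} (A : Matrix (Fin n) (Fin n) ℝ) : 0 ≤ frobSq A :=
  Finset.sum_nonneg fun _ _ => Finset.sum_nonneg fun _ _ => sq_nonneg _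

lemma frobSq_entry_le {n : ℕ} (A : Matrix (Fin n) (Fin n) ℝ) (i j : Fin n) :
    (A i j) ^ 2 ≤ frobSq A := by
  have h2 : (A i j) ^ 2 ≤ ∑ j', (A i j') ^ 2 :=
    Finset.single_le_sum (f := fun j' => (A i j') ^ 2) (fun _ _ => sq_nonneg _) (Finset.mem_univ j)
  have h1 : (∑ j', (A i j') ^ 2) ≤ frobSq A :=
    Finset.single_le_sum (f := fun i' => ∑ j', (A i' j') ^ 2)
      (fun i' _ => Finset.sum_nonneg fun _ _ => sq_nonneg _) (Finset.mem_univ i)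
  linarith

lemma frobSq_par {n : ℕ} (A B : Matrix (Fin n) (Fin n) ℝ) :
    frobSq (A - B) + frobSq (A + B) = 2 * frobSq A + 2 * frobSq B := by
  simp only [frobSq, Finset.mul_sum, ← Finset.sum_add_distrib]
  refine Finset.sum_congr rfl fun i _ => Finset.sum_congr rfl fun j _ => ?_
  simp [Matrix.sub_apply, Matrix.add_apply]; ring

lemma frobSq_smul {n : ℕ} (c : ℝ) (A : Matrix (Fin n) (Fin n) ℝ) :
    frobSq (c • A) = c ^ 2 * frobSq A := by
  simp only [frobSq, Finset.mul_sum]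
  exact Finset.sum_congr rfl fun i _ => Finset.sum_congr rfl fun j _ => by
    simp [Matrix.smul_apply]; ring

lemma mApp_add {n : ℕ} (A B : Matrix (Fin n) (Fin n) ℝ) (x : EuclideanSpace ℝ (Fin n)) :
    mApp (A + B) x = mApp A x + mApp B x := by simp [mApp]

lemma mApp_smul {n : ℕ} (c : ℝ) (A : Matrix (Fin n) (Fin n) ℝ) (x : EuclideanSpace ℝ (Fin n)) :
    mApp (c • A) x = c • mApp A x := by simp [mApp]

lemma mApp_cont {n : ℕ} (x : EuclideanSpace ℝ (Fin n)) :
    Continuous fun G : Matrix (Fin n) (Fin n) ℝ => mApp G x :=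
  LinearMap.continuous_of_finiteDimensional
    ((LinearMap.applyₗ x).comp (Matrix.toEuclideanLin (𝕜 := ℝ) (n := Fin n) (m := Fin n)).toLinearMap)

lemma quadF_mid {n : ℕ} (p q : ℝ × EuclideanSpace ℝ (Fin n) × Matrix (Fin n) (Fin n) ℝ)
    (x : EuclideanSpace ℝ (Fin n)) :
    quadF (midQ p q) x = (quadF p x + quadF q x) / 2 := by
  simp only [quadF, midQ, mApp_add, mApp_smul, inner_add_left, real_inner_smul_left,
    inner_add_right, real_inner_smul_right, inner_smul_right]
  ring

lemma quadF_cont {n : ℕ} (x : EuclideanSpace ℝ (Fin n)) :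
    Continuous fun p : ℝ × EuclideanSpace ℝ (Fin n) × Matrix (Fin n) (Fin n) ℝ => quadF p x := by
  unfold quadF
  refine (continuous_fst.add ?_).add ?_
  · exact (continuous_snd.fst.inner continuous_const)
  · exact (continuous_const.inner ((mApp_cont x).comp continuous_snd.snd)).div_const 2

lemma half_smul_add_self {M : Type*} [AddCommGroup M] [Module ℝ M] (a : M) :
    (2⁻¹ : ℝ) • (a + a) = a := by
  rw [← two_smul ℝ a, smul_smul]; norm_num

theorem stmt_14 (n : ℕ) (S : Finset (EuclideanSpace ℝ (Fin n))) (hS : S.Nonempty)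
    (f : EuclideanSpace ℝ (Fin n) → ℝ) (x₀ : EuclideanSpace ℝ (Fin n))
    (Qs : ℝ → ℝ × EuclideanSpace ℝ (Fin n) × Matrix (Fin n) (Fin n) ℝ)
    (hsymm : ∀ σ, 0 ≤ σ → (Qs σ).2.2.IsSymm)
    (hfeas : ∀ σ, 0 ≤ σ → ∀ x ∈ S, quadF (Qs σ) x = f x)
    (hmin : ∀ σ, 0 < σ → ∀ q : ℝ × EuclideanSpace ℝ (Fin n) × Matrix (Fin n) (Fin n) ℝ,
      q.2.2.IsSymm → (∀ x ∈ S, quadF q x = f x) → objF x₀ σ (Qs σ) ≤ objF x₀ σ q)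
    (hfrob0 : ∀ q : ℝ × EuclideanSpace ℝ (Fin n) × Matrix (Fin n) (Fin n) ℝ,
      q.2.2.IsSymm → (∀ x ∈ S, quadF q x = f x) → frobSq (Qs 0).2.2 ≤ frobSq q.2.2)
    (hgrad0 : ∀ q : ℝ × EuclideanSpace ℝ (Fin n) × Matrix (Fin n) (Fin n) ℝ,
      q.2.2.IsSymm → (∀ x ∈ S, quadF q x = f x) → frobSq q.2.2 = frobSq (Qs 0).2.2 →
      ‖mApp (Qs 0).2.2 x₀ + (Qs 0).2.1‖ ≤ ‖mApp q.2.2 x₀ + q.2.1‖) :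
    Filter.Tendsto Qs (nhdsWithin 0 (Set.Ioi 0)) (nhds (Qs 0)) := by
  classical
  obtain ⟨xb, hxb⟩ := hS
  set C : ℝ := ‖mApp (Qs 0).2.2 x₀ + (Qs 0).2.1‖ ^ 2 with hC
  have hCnn : 0 ≤ C := sq_nonneg _
  -- basic bounds for σ > 0
  have hb : ∀ σ : ℝ, 0 < σ →
      ‖mApp (Qs σ).2.2 x₀ + (Qs σ).2.1‖ ^ 2 ≤ C ∧
      frobSq (Qs σ).2.2 ≤ frobSq (Qs 0).2.2 + σ * C := by
    intro σ hσ
    have h1 := hmin σ hσ (Qs 0) (hsymm 0 le_rfl) (hfeas 0 le_rfl)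
    have h2 := hfrob0 (Qs σ) (hsymm σ hσ.le) (hfeas σ hσ.le)
    simp only [objF, ← hC] at h1
    constructor
    · nlinarith [sq_nonneg ‖mApp (Qs σ).2.2 x₀ + (Qs σ).2.1‖]
    · nlinarith [sq_nonneg ‖mApp (Qs σ).2.2 x₀ + (Qs σ).2.1‖]
  have hv : ∀ σ : ℝ, 0 < σ →
      ‖mApp (Qs σ).2.2 x₀ + (Qs σ).2.1‖ ≤ ‖mApp (Qs 0).2.2 x₀ + (Qs 0).2.1‖ := by
    intro σ hσ
    have := (hb σ hσ).1
    calc ‖mApp (Qs σ).2.2 x₀ + (Qs σ).2.1‖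
        = √(‖mApp (Qs σ).2.2 x₀ + (Qs σ).2.1‖ ^ 2) := (Real.sqrt_sq (norm_nonneg _)).symm
      _ ≤ √C := Real.sqrt_le_sqrt this
      _ = ‖mApp (Qs 0).2.2 x₀ + (Qs 0).2.1‖ := Real.sqrt_sq (norm_nonneg _)
  -- midpoint feasibility helper
  have hmidfeas : ∀ p q : ℝ × EuclideanSpace ℝ (Fin n) × Matrix (Fin n) (Fin n) ℝ,
      (∀ x ∈ S, quadF p x = f x) → (∀ x ∈ S, quadF q x = f x) →
      ∀ x ∈ S, quadF (midQ p q) x = f x := by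
    intro p q hp hq x hx
    rw [quadF_mid, hp x hx, hq x hx]; ring
  -- quantitative bound on G
  have hGkey : ∀ σ : ℝ, 0 < σ → frobSq ((Qs σ).2.2 - (Qs 0).2.2) ≤ 2 * σ * C := by
    intro σ hσ
    have hfe := hmidfeas (Qs σ) (Qs 0) (hfeas σ hσ.le) (hfeas 0 le_rfl)
    have hsy : (midQ (Qs σ) (Qs 0)).2.2.IsSymm :=
      ((hsymm σ hσ.le).add (hsymm 0 le_rfl)).smul _
    have hmid := hfrob0 (midQ (Qs σ) (Qs 0)) hsy hfe
    have hmid' : frobSq (midQ (Qs σ) (Qs 0)).2.2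
        = (2⁻¹ : ℝ) ^ 2 * frobSq ((Qs σ).2.2 + (Qs 0).2.2) := frobSq_smul _ _
    have hpar := frobSq_par (Qs σ).2.2 (Qs 0).2.2
    have h2 := (hb σ hσ).2
    nlinarith [frobSq_nonneg ((Qs σ).2.2 - (Qs 0).2.2)]
  -- convergence of the matrix part
  have hGtend : Filter.Tendsto (fun σ => (Qs σ).2.2) (nhdsWithin 0 (Set.Ioi 0))
      (nhds (Qs 0).2.2) := by
    apply tendsto_pi_nhds.mpr; intro i; apply tendsto_pi_nhds.mpr; intro j
    rw [← tendsto_sub_nhds_zero_iff]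
    have hsq : Filter.Tendsto (fun σ : ℝ => √(2 * σ * C)) (nhdsWithin 0 (Set.Ioi 0)) (nhds 0) := by
      have h1 : Filter.Tendsto (fun σ : ℝ => 2 * σ * C) (nhdsWithin 0 (Set.Ioi 0)) (nhds 0) := by
        have : Continuous fun σ : ℝ => 2 * σ * C := (continuous_const.mul continuous_id).mul continuous_const
        have h2 := (this.tendsto 0).mono_left (nhdsWithin_le_nhds (s := Set.Ioi (0:ℝ)))
        simpa using h2
      have := (Real.continuous_sqrt.tendsto 0).comp h1
      simpa [Function.comp_def] using this
    refine squeeze_zero_norm' ?_ hsq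
    filter_upwards [self_mem_nhdsWithin] with σ (hσ : (0:ℝ) < σ)
    have h1 := hGkey σ hσ
    have h2 := frobSq_entry_le ((Qs σ).2.2 - (Qs 0).2.2) i j
    have h3 : ((Qs σ).2.2 - (Qs 0).2.2) i j = (Qs σ).2.2 i j - (Qs 0).2.2 i j := rfl
    rw [h3] at h2
    have : |(Qs σ).2.2 i j - (Qs 0).2.2 i j| ≤ √(2 * σ * C) := by
      rw [← Real.sqrt_sq_eq_abs]
      exact Real.sqrt_le_sqrt (by linarith)
    simpa using this
  -- the c-component as a continuous function of (g, G)
  have hcfun : ∀ σ : ℝ, 0 ≤ σ →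
      (Qs σ).1 = f xb - ⟪(Qs σ).2.1, xb⟫ - ⟪xb, mApp (Qs σ).2.2 xb⟫ / 2 := by
    intro σ hσ
    have := hfeas σ hσ xb hxb
    simp only [quadF] at this
    linarith
  -- convergence of the gradient part
  have hgtend : Filter.Tendsto (fun σ => (Qs σ).2.1) (nhdsWithin 0 (Set.Ioi 0))
      (nhds (Qs 0).2.1) := by
    refine Filter.tendsto_of_subseq_tendsto fun ns hns => ?_
    have hpos : ∀ᶠ k in Filter.atTop, ns k ∈ Set.Ioi (0:ℝ) :=
      hns.eventually_mem self_mem_nhdsWithin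
    have hGseq : Filter.Tendsto (fun k => (Qs (ns k)).2.2) Filter.atTop (nhds (Qs 0).2.2) :=
      hGtend.comp hns
    have hmxseq : Filter.Tendsto (fun k => mApp (Qs (ns k)).2.2 x₀) Filter.atTop
        (nhds (mApp (Qs 0).2.2 x₀)) := ((mApp_cont x₀).tendsto _).comp hGseq
    set R : ℝ := ‖mApp (Qs 0).2.2 x₀ + (Qs 0).2.1‖ + (‖mApp (Qs 0).2.2 x₀‖ + 1) with hR
    have hbound : ∀ᶠ k in Filter.atTop, (Qs (ns k)).2.1 ∈ closedBall (0 : EuclideanSpace ℝ (Fin n)) R := by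
      have hev : ∀ᶠ k in Filter.atTop, ‖mApp (Qs (ns k)).2.2 x₀‖ ≤ ‖mApp (Qs 0).2.2 x₀‖ + 1 := by
        have := (hmxseq.norm.eventually (eventually_le_nhds (by linarith : ‖mApp (Qs 0).2.2 x₀‖ < ‖mApp (Qs 0).2.2 x₀‖ + 1)))
        exact this
      filter_upwards [hpos, hev] with k hk1 hk2
      rw [mem_closedBall, dist_zero_right]
      have h1 := hv (ns k) hk1
      have h2 : ‖(Qs (ns k)).2.1‖ ≤ ‖mApp (Qs (ns k)).2.2 x₀ + (Qs (ns k)).2.1‖ + ‖mApp (Qs (ns k)).2.2 x₀‖ := by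
        have := norm_add_le (mApp (Qs (ns k)).2.2 x₀ + (Qs (ns k)).2.1) (-(mApp (Qs (ns k)).2.2 x₀))
        simpa [add_assoc, add_comm, add_left_comm] using this
      rw [hR]; linarith
    obtain ⟨ghat, _, φ, hφ, hgφ⟩ :=
      tendsto_subseq_of_frequently_bounded isBounded_closedBall hbound.frequently
    refine ⟨φ, ?_⟩
    -- the subsequence of σ's
    set σk : ℕ → ℝ := fun k => ns (φ k) with hσk
    have hσkt : Filter.Tendsto σk Filter.atTop (nhdsWithin 0 (Set.Ioi 0)) :=
      hns.comp hφ.tendsto_atTop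
    have hσkpos : ∀ᶠ k in Filter.atTop, 0 < σk k := hσkt.eventually_mem self_mem_nhdsWithin
    have hGk : Filter.Tendsto (fun k => (Qs (σk k)).2.2) Filter.atTop (nhds (Qs 0).2.2) :=
      hGtend.comp hσkt
    have hgk : Filter.Tendsto (fun k => (Qs (σk k)).2.1) Filter.atTop (nhds ghat) := hgφ
    -- the full triple converges to qhat
    set chat : ℝ := f xb - ⟪ghat, xb⟫ - ⟪xb, mApp (Qs 0).2.2 xb⟫ / 2 with hchat
    have hck : Filter.Tendsto (fun k => (Qs (σk k)).1) Filter.atTop (nhds chat) := by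
      have hcont : Filter.Tendsto
          (fun k => f xb - ⟪(Qs (σk k)).2.1, xb⟫ - ⟪xb, mApp (Qs (σk k)).2.2 xb⟫ / 2)
          Filter.atTop (nhds chat) := by
        refine Filter.Tendsto.sub (Filter.Tendsto.sub tendsto_const_nhds ?_) (Filter.Tendsto.div_const ?_ 2)
        · exact (continuous_id.inner continuous_const).tendsto ghat |>.comp hgk
        · exact ((continuous_const.inner (mApp_cont xb)).tendsto _).comp hGk
      refine hcont.congr' ?_
      filter_upwards [hσkpos] with k hk
      exact (hcfun (σk k) hk.le).symm
    set qhat : ℝ × EuclideanSpace ℝ (Fin n) × Matrix (Fin n) (Fin n) ℝ :=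
      (chat, ghat, (Qs 0).2.2) with hqhat
    have htrip : Filter.Tendsto (fun k => Qs (σk k)) Filter.atTop (nhds qhat) := by
      rw [nhds_prod_eq, nhds_prod_eq]
      exact hck.prodMk (hgk.prodMk hGk)
    -- qhat is feasible
    have hfeashat : ∀ x ∈ S, quadF qhat x = f x := by
      intro x hx
      have h1 : Filter.Tendsto (fun k => quadF (Qs (σk k)) x) Filter.atTop (nhds (quadF qhat x)) :=
        ((quadF_cont x).tendsto _).comp htrip
      have h2 : Filter.Tendsto (fun k => quadF (Qs (σk k)) x) Filter.atTop (nhds (f x)) := by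
        refine Filter.Tendsto.congr' ?_ tendsto_const_nhds
        filter_upwards [hσkpos] with k hk
        exact (hfeas (σk k) hk.le x hx).symm
      exact tendsto_nhds_unique h1 h2
    -- norm bound passes to the limit
    have hvhat : ‖mApp (Qs 0).2.2 x₀ + ghat‖ ≤ ‖mApp (Qs 0).2.2 x₀ + (Qs 0).2.1‖ := by
      have h1 : Filter.Tendsto (fun k => ‖mApp (Qs (σk k)).2.2 x₀ + (Qs (σk k)).2.1‖)
          Filter.atTop (nhds ‖mApp (Qs 0).2.2 x₀ + ghat‖) := by
        have := Filter.Tendsto.add (((mApp_cont x₀).tendsto _).comp hGk) hgk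
        exact this.norm
      refine le_of_tendsto h1 ?_
      filter_upwards [hσkpos] with k hk
      exact hv (σk k) hk
    -- by the bilevel optimality, ghat = (Qs 0).2.1
    have hfrobeq : frobSq qhat.2.2 = frobSq (Qs 0).2.2 := rfl
    have h1 := hgrad0 qhat (hsymm 0 le_rfl) hfeashat hfrobeq
    have hveq : ‖mApp (Qs 0).2.2 x₀ + ghat‖ = ‖mApp (Qs 0).2.2 x₀ + (Qs 0).2.1‖ :=
      le_antisymm hvhat h1
    -- midpoint argument
    have hmid := hgrad0 (midQ qhat (Qs 0))
      (((hsymm 0 le_rfl).add (hsymm 0 le_rfl)).smul _)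
      (hmidfeas qhat (Qs 0) hfeashat (hfeas 0 le_rfl))
      (by
        have : (midQ qhat (Qs 0)).2.2 = (Qs 0).2.2 := half_smul_add_self _
        rw [this])
    have hmid2 : (midQ qhat (Qs 0)).2.2 = (Qs 0).2.2 := half_smul_add_self _
    have hmidv : mApp (midQ qhat (Qs 0)).2.2 x₀ + (midQ qhat (Qs 0)).2.1
        = (2⁻¹ : ℝ) • ((mApp (Qs 0).2.2 x₀ + ghat) + (mApp (Qs 0).2.2 x₀ + (Qs 0).2.1)) := by
      rw [hmid2]
      show mApp (Qs 0).2.2 x₀ + (2⁻¹ : ℝ) • (ghat + (Qs 0).2.1) = _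
      rw [smul_add, smul_add, smul_add]
      rw [← half_smul_add_self (mApp (Qs 0).2.2 x₀)]
      module
    rw [hmidv] at hmid
    rw [norm_smul] at hmid
    simp only [norm_inv, Real.norm_ofNat] at hmid
    -- conclude ghat = (Qs 0).2.1 via parallelogram
    have hpar := norm_add_sq_real (mApp (Qs 0).2.2 x₀ + ghat) (mApp (Qs 0).2.2 x₀ + (Qs 0).2.1)
    have hpar2 := norm_sub_sq_real (mApp (Qs 0).2.2 x₀ + ghat) (mApp (Qs 0).2.2 x₀ + (Qs 0).2.1)
    have hz : ‖(mApp (Qs 0).2.2 x₀ + ghat) - (mApp (Qs 0).2.2 x₀ + (Qs 0).2.1)‖ ^ 2 ≤ 0 := by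
      nlinarith [norm_nonneg ((mApp (Qs 0).2.2 x₀ + ghat) + (mApp (Qs 0).2.2 x₀ + (Qs 0).2.1)),
        norm_nonneg (mApp (Qs 0).2.2 x₀ + (Qs 0).2.1)]
    have hz2 : (mApp (Qs 0).2.2 x₀ + ghat) - (mApp (Qs 0).2.2 x₀ + (Qs 0).2.1) = 0 := by
      have := sq_nonneg ‖(mApp (Qs 0).2.2 x₀ + ghat) - (mApp (Qs 0).2.2 x₀ + (Qs 0).2.1)‖
      have hn : ‖(mApp (Qs 0).2.2 x₀ + ghat) - (mApp (Qs 0).2.2 x₀ + (Qs 0).2.1)‖ = 0 := by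
        nlinarith
      exact norm_eq_zero.mp hn
    have hgeq : ghat = (Qs 0).2.1 := by
      have := sub_eq_zero.mp hz2
      exact add_left_cancel this
    rw [hgeq] at hgk
    exact hgk
  -- convergence of the constant part
  have hctend : Filter.Tendsto (fun σ => (Qs σ).1) (nhdsWithin 0 (Set.Ioi 0))
      (nhds (Qs 0).1) := by
    have hcont : Filter.Tendsto
        (fun σ => f xb - ⟪(Qs σ).2.1, xb⟫ - ⟪xb, mApp (Qs σ).2.2 xb⟫ / 2)
        (nhdsWithin 0 (Set.Ioi 0))
        (nhds (f xb - ⟪(Qs 0).2.1, xb⟫ - ⟪xb, mApp (Qs 0).2.2 xb⟫ / 2)) := by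
      refine Filter.Tendsto.sub (Filter.Tendsto.sub tendsto_const_nhds ?_) (Filter.Tendsto.div_const ?_ 2)
      · exact ((continuous_id.inner continuous_const).tendsto _).comp hgtend
      · exact ((continuous_const.inner (mApp_cont xb)).tendsto _).comp hGtend
    rw [← hcfun 0 le_rfl] at hcont
    refine hcont.congr' ?_
    filter_upwards [self_mem_nhdsWithin] with σ (hσ : (0:ℝ) < σ)
    exact (hcfun σ hσ.le).symm
  -- combine
  have : Filter.Tendsto (fun σ => ((Qs σ).1, (Qs σ).2.1, (Qs σ).2.2))
      (nhdsWithin 0 (Set.Ioi 0)) (nhds ((Qs 0).1, (Qs 0).2.1, (Qs 0).2.2)) := by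
    rw [nhds_prod_eq, nhds_prod_eq]
    exact hctend.prodMk (hgtend.prodMk hGtend)
  simpa using this
end

section
/- Let ψ, φ : K → ℝ be continuous functions on a nonempty closed set K in a finite-dimensional normed space, and for σ > 0 let x_σ minimize φ(x) + σψ(x) over K. Suppose the bilevel problem min ψ subject to x ∈ argmin_K φ has a unique solution x₀, and suppose the family {x_σ : 0 < σ ≤ 1} is bounded. Then x_σ → x₀ as σ → 0⁺. -/
open Filter Topology

theorem stmt_15 {E : Type*} [NormedAddCommGroup E] [NormedSpace ℝ E] [FiniteDimensional ℝ E]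
    (K : Set E) (hK : K.Nonempty) (hKc : IsClosed K)
    (ψ φ : E → ℝ) (hψ : ContinuousOn ψ K) (hφ : ContinuousOn φ K)
    (xs : ℝ → E)
    (hxs : ∀ σ : ℝ, 0 < σ → xs σ ∈ K ∧
      ∀ y ∈ K, φ (xs σ) + σ * ψ (xs σ) ≤ φ y + σ * ψ y)
    (x₀ : E) (hx₀K : x₀ ∈ K) (hx₀φ : ∀ y ∈ K, φ x₀ ≤ φ y)
    (hx₀ψ : ∀ y ∈ K, (∀ z ∈ K, φ y ≤ φ z) → ψ x₀ ≤ ψ y)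
    (huniq : ∀ w ∈ K, (∀ y ∈ K, φ w ≤ φ y) →
      (∀ y ∈ K, (∀ z ∈ K, φ y ≤ φ z) → ψ w ≤ ψ y) → w = x₀)
    (hbdd : ∃ C : ℝ, ∀ σ : ℝ, 0 < σ → σ ≤ 1 → ‖xs σ‖ ≤ C) :
    Filter.Tendsto xs (nhdsWithin 0 (Set.Ioi 0)) (nhds x₀) := by
  obtain ⟨C, hC⟩ := hbdd
  apply Filter.tendsto_of_subseq_tendsto
  intro ns hns
  -- eventually the sequence is in (0, 1]
  have hpos : ∀ᶠ n in atTop, ns n ∈ Set.Ioi (0:ℝ) :=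
    hns.eventually (eventually_mem_nhdsWithin)
  have hns0 : Tendsto ns atTop (𝓝 0) := hns.mono_right nhdsWithin_le_nhds
  have hle1 : ∀ᶠ n in atTop, ns n ≤ 1 := by
    have := hns0.eventually (eventually_le_nhds (by norm_num : (0:ℝ) < 1))
    exact this
  have hmem : ∀ᶠ n in atTop, xs (ns n) ∈ Metric.closedBall (0:E) C := by
    filter_upwards [hpos, hle1] with n h1 h2
    simpa [Metric.mem_closedBall, dist_eq_norm] using hC (ns n) h1 h2
  obtain ⟨w, -, ms, hms, hmsw⟩ :=
    tendsto_subseq_of_frequently_bounded Metric.isBounded_closedBall hmem.frequently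
  refine ⟨ms, ?_⟩
  set ρ : ℕ → ℝ := fun n => ns (ms n) with hρ
  have hρ0 : Tendsto ρ atTop (𝓝 0) := hns0.comp hms.tendsto_atTop
  have hρpos : ∀ᶠ n in atTop, 0 < ρ n := hms.tendsto_atTop.eventually hpos
  have hxρ : Tendsto (fun n => xs (ρ n)) atTop (𝓝 w) := hmsw
  have hxρK : ∀ᶠ n in atTop, xs (ρ n) ∈ K := by
    filter_upwards [hρpos] with n hn using (hxs (ρ n) hn).1
  have hwK : w ∈ K := hKc.mem_of_tendsto hxρ hxρK
  have hxρKw : Tendsto (fun n => xs (ρ n)) atTop (𝓝[K] w) :=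
    tendsto_nhdsWithin_of_tendsto_nhds_of_eventually_within _ hxρ hxρK
  have hφw : Tendsto (fun n => φ (xs (ρ n))) atTop (𝓝 (φ w)) :=
    ((hφ w hwK).tendsto).comp hxρKw
  have hψw : Tendsto (fun n => ψ (xs (ρ n))) atTop (𝓝 (ψ w)) :=
    ((hψ w hwK).tendsto).comp hxρKw
  -- w minimizes φ on K
  have hwφ : ∀ y ∈ K, φ w ≤ φ y := by
    intro y hy
    have hL : Tendsto (fun n => φ (xs (ρ n)) + ρ n * ψ (xs (ρ n))) atTop (𝓝 (φ w)) := by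
      have := hφw.add ((hρ0.mul hψw))
      simpa using this
    have hR : Tendsto (fun n => φ y + ρ n * ψ y) atTop (𝓝 (φ y)) := by
      have := (tendsto_const_nhds (x := φ y)).add (hρ0.mul_const (ψ y))
      simpa using this
    refine le_of_tendsto_of_tendsto hL hR ?_
    filter_upwards [hρpos] with n hn using (hxs (ρ n) hn).2 y hy
  -- w minimizes ψ among minimizers of φ
  have hwψ : ∀ y ∈ K, (∀ z ∈ K, φ y ≤ φ z) → ψ w ≤ ψ y := by
    intro y hy hyargmin
    refine le_of_tendsto_of_tendsto hψw tendsto_const_nhds ?_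
    filter_upwards [hρpos] with n hn
    have h1 := (hxs (ρ n) hn).2 y hy
    have h2 := hyargmin (xs (ρ n)) (hxs (ρ n) hn).1
    have : ρ n * ψ (xs (ρ n)) ≤ ρ n * ψ y := by linarith
    exact le_of_mul_le_mul_left this hn
  have hw : w = x₀ := huniq w hwK hwφ hwψ
  simpa [hw, Function.comp_def] using hmsw
end

section
/- Let S = {y₀, y₁, …, y_m} ⊂ B(y₀, r) with r > 0, m ≥ n, and assume L = (1/r)(y₁−y₀ ⋯ y_m−y₀) ∈ ℝ^{n×m} has rank n. Let F be continuously differentiable on B(y₀, r) with ∇F Lipschitz with constant ν > 0 there. Then any quadratic Q with Q(y_j) = F(y_j) for all j satisfies ‖∇Q(x) − ∇F(x)‖₂ ≤ (5√m/2)‖L⁺‖₂ (ν + ‖∇²Q‖₂) r for every x ∈ B(y₀, r). -/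
open MeasureTheory Metric Real
open scoped Matrix
open scoped RealInnerProductSpace

noncomputable def l2op {k l : ℕ} (A : Matrix (Fin k) (Fin l) ℝ) : ℝ :=
  ‖LinearMap.toContinuousLinearMap (Matrix.toEuclideanLin A)‖

lemma csv_inner_eq_sum {k : ℕ} (u v : EuclideanSpace ℝ (Fin k)) : ⟪u,v⟫ = ∑ i, u i * v i := by
  simp [PiLp.inner_apply, RCLike.inner_apply, mul_comm]

lemma csv_tl_apply {k l : ℕ} (A : Matrix (Fin k) (Fin l) ℝ) (x : EuclideanSpace ℝ (Fin l))
    (i : Fin k) :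
    (Matrix.toEuclideanLin A x : EuclideanSpace ℝ (Fin k)) i = ∑ j, A i j * x j := by
  simp [Matrix.toEuclideanLin_apply, Matrix.mulVec, dotProduct]

lemma csv_tl_norm_le {k l : ℕ} (A : Matrix (Fin k) (Fin l) ℝ) (x : EuclideanSpace ℝ (Fin l)) :
    ‖(Matrix.toEuclideanLin A x : EuclideanSpace ℝ (Fin k))‖ ≤ l2op A * ‖x‖ :=
  (LinearMap.toContinuousLinearMap (Matrix.toEuclideanLin A)).le_opNorm x

lemma csv_l2op_nonneg {k l : ℕ} (A : Matrix (Fin k) (Fin l) ℝ) : 0 ≤ l2op A := norm_nonneg _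

lemma csv_symm_inner {n : ℕ} (G : Matrix (Fin n) (Fin n) ℝ) (hG : G.IsSymm)
    (x d : EuclideanSpace ℝ (Fin n)) : ⟪x, mApp G d⟫ = ⟪d, mApp G x⟫ := by
  simp only [csv_inner_eq_sum, mApp, csv_tl_apply, Finset.mul_sum]
  rw [Finset.sum_comm]
  apply Finset.sum_congr rfl; intro i _; apply Finset.sum_congr rfl; intro j _
  rw [← hG.apply i j]; ring

lemma csv_quad_expand {n : ℕ} (G : Matrix (Fin n) (Fin n) ℝ) (hG : G.IsSymm)
    (gv x d : EuclideanSpace ℝ (Fin n)) :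
    (⟪gv, x + d⟫ + ⟪x + d, mApp G (x + d)⟫ / 2) - (⟪gv, x⟫ + ⟪x, mApp G x⟫ / 2)
      = ⟪mApp G x + gv, d⟫ + ⟪d, mApp G d⟫ / 2 := by
  have h1 : mApp G (x + d) = mApp G x + mApp G d := map_add (Matrix.toEuclideanLin G) x d
  rw [h1, inner_add_right gv, inner_add_left, inner_add_right, inner_add_right,
    inner_add_left, csv_symm_inner G hG x d, real_inner_comm (mApp G x) d]
  ring

lemma csv_taylor {n : ℕ} (y0 : EuclideanSpace ℝ (Fin n)) (r ν : ℝ) (hν : 0 ≤ ν)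
    (F : EuclideanSpace ℝ (Fin n) → ℝ) (F' : EuclideanSpace ℝ (Fin n) → EuclideanSpace ℝ (Fin n))
    (hF : ∀ x ∈ closedBall y0 r, HasGradientAt F (F' x) x)
    (hlip : ∀ u ∈ closedBall y0 r, ∀ v ∈ closedBall y0 r, ‖F' u - F' v‖ ≤ ν * ‖u - v‖)
    (x : EuclideanSpace ℝ (Fin n)) (hx : x ∈ closedBall y0 r)
    (v : EuclideanSpace ℝ (Fin n)) (hv : v ∈ closedBall y0 r) :
    |F v - F x - ⟪F' x, v - x⟫| ≤ ν / 2 * ‖v - x‖ ^ 2 := by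
  set u := v - x with hu
  have hmem : ∀ t ∈ Set.Icc (0:ℝ) 1, x + t • u ∈ closedBall y0 r := fun t ht =>
    (convex_closedBall y0 r).add_smul_sub_mem hx hv ht
  have hderiv : ∀ t ∈ Set.Icc (0:ℝ) 1,
      HasDerivAt (fun s : ℝ => F (x + s • u)) ⟪F' (x + t • u), u⟫ t := by
    intro t ht
    have hc : HasDerivAt (fun s : ℝ => x + s • u) u t := by
      simpa using ((hasDerivAt_id t).smul_const u).const_add x
    have hfd : HasFDerivAt F ((InnerProductSpace.toDual ℝ _) (F' (x + t • u))) (x + t • u) :=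
      (hasGradientAt_iff_hasFDerivAt.mp (hF _ (hmem t ht)))
    have h := hfd.comp_hasDerivAt t hc
    simp at h
    exact h
  have hF'cont : ContinuousOn F' (closedBall y0 r) := by
    apply LipschitzOnWith.continuousOn (K := Real.toNNReal ν)
    intro a ha b hb
    rw [edist_dist, edist_dist, dist_eq_norm, dist_eq_norm, ← ENNReal.ofReal_coe_nnreal,
      ← ENNReal.ofReal_mul (by positivity)]
    exact ENNReal.ofReal_le_ofReal (by simpa [Real.coe_toNNReal ν hν] using hlip a ha b hb)
  have hpathcont : ContinuousOn (fun t : ℝ => x + t • u) (Set.Icc 0 1) :=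
    (continuous_const.add (continuous_id.smul continuous_const)).continuousOn
  have hfcont : ContinuousOn (fun t : ℝ => ⟪F' (x + t • u), u⟫) (Set.Icc 0 1) :=
    ContinuousOn.inner (hF'cont.comp hpathcont hmem) continuousOn_const
  have hintg : IntervalIntegrable (fun t : ℝ => ⟪F' (x + t • u), u⟫) volume 0 1 := by
    apply ContinuousOn.intervalIntegrable
    rwa [Set.uIcc_of_le (by norm_num)]
  have key : ∫ t in (0:ℝ)..1, ⟪F' (x + t • u), u⟫ = F v - F x := by
    have := intervalIntegral.integral_eq_sub_of_hasDerivAt (a := (0:ℝ)) (b := 1)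
      (f := fun s : ℝ => F (x + s • u)) (f' := fun t => ⟪F' (x + t • u), u⟫)
      (fun t ht => hderiv t (by rwa [Set.uIcc_of_le (by norm_num)] at ht)) hintg
    simpa [hu] using this
  have hsplit : F v - F x - ⟪F' x, u⟫
      = ∫ t in (0:ℝ)..1, (⟪F' (x + t • u), u⟫ - ⟪F' x, u⟫) := by
    rw [intervalIntegral.integral_sub hintg intervalIntegrable_const, key]
    simp
  rw [hsplit]
  have hb : ∀ t ∈ Set.Ioc (0:ℝ) 1, ‖⟪F' (x + t • u), u⟫ - ⟪F' x, u⟫‖ ≤ ν * ‖u‖ ^ 2 * t := by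
    intro t ht
    have ht' : t ∈ Set.Icc (0:ℝ) 1 := ⟨le_of_lt ht.1, ht.2⟩
    have h1 : ⟪F' (x + t • u), u⟫ - ⟪F' x, u⟫ = ⟪F' (x + t • u) - F' x, u⟫ := by
      rw [inner_sub_left]
    rw [h1]
    calc ‖⟪F' (x + t • u) - F' x, u⟫‖ ≤ ‖F' (x + t • u) - F' x‖ * ‖u‖ := norm_inner_le_norm _ _
      _ ≤ (ν * ‖(x + t • u) - x‖) * ‖u‖ := by
          gcongr; exact hlip _ (hmem t ht') _ hx
      _ = ν * ‖u‖ ^ 2 * t := by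
          simp [norm_smul, abs_of_nonneg (le_of_lt ht.1)]; ring
  have hmain : ‖∫ t in (0:ℝ)..1, (⟪F' (x + t • u), u⟫ - ⟪F' x, u⟫)‖
      ≤ |∫ t in (0:ℝ)..1, ν * ‖u‖ ^ 2 * t| := by
    apply intervalIntegral.norm_integral_le_abs_of_norm_le
    · filter_upwards [MeasureTheory.self_mem_ae_restrict measurableSet_Ioc] with t ht
      exact hb t (by rwa [Set.uIoc_of_le (by norm_num : (0:ℝ) ≤ 1)] at ht)
    · exact (continuous_const.mul continuous_id).intervalIntegrable 0 1
  have hval : ∫ t in (0:ℝ)..1, ν * ‖u‖ ^ 2 * t = ν / 2 * ‖u‖ ^ 2 := by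
    rw [intervalIntegral.integral_const_mul, integral_id]; ring
  rw [← Real.norm_eq_abs]
  exact hmain.trans (by rw [hval, abs_of_nonneg (by positivity)])

lemma csv_llt_unit {n m : ℕ} (L : Matrix (Fin n) (Fin m) ℝ) (hrank : L.rank = n) :
    IsUnit (L * Lᵀ).det := by
  have h1 : (L * Lᵀ).rank = n := by rw [Matrix.rank_self_mul_transpose, hrank]
  have hsurj : Function.Surjective (L * Lᵀ).mulVec := by
    have htop : LinearMap.range (L * Lᵀ).mulVecLin = ⊤ := by
      apply Submodule.eq_top_of_finrank_eq
      rw [← Matrix.rank, h1]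
      simp [Module.finrank_pi]
    intro w
    have : w ∈ LinearMap.range (L * Lᵀ).mulVecLin := htop ▸ Submodule.mem_top
    obtain ⟨v, hv⟩ := this
    exact ⟨v, hv⟩
  exact (Matrix.isUnit_iff_isUnit_det _).mp (Matrix.mulVec_surjective_iff_isUnit.mp hsurj)

lemma csv_key_id {n m : ℕ} (L : Matrix (Fin n) (Fin m) ℝ) (hdet : IsUnit (L * Lᵀ).det)
    (e : EuclideanSpace ℝ (Fin n)) :
    ⟪(Matrix.toEuclideanLin Lᵀ e : EuclideanSpace ℝ (Fin m)),
      (Matrix.toEuclideanLin (Lᵀ * (L * Lᵀ)⁻¹) e : EuclideanSpace ℝ (Fin m))⟫ = ⟪e, e⟫ := by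
  set f : Fin n → ℝ := fun i => e i with hf
  have lhs : ⟪(Matrix.toEuclideanLin Lᵀ e : EuclideanSpace ℝ (Fin m)),
      (Matrix.toEuclideanLin (Lᵀ * (L * Lᵀ)⁻¹) e : EuclideanSpace ℝ (Fin m))⟫
      = (Lᵀ *ᵥ f) ⬝ᵥ ((Lᵀ * (L * Lᵀ)⁻¹) *ᵥ f) := by
    rw [csv_inner_eq_sum]
    simp only [csv_tl_apply, dotProduct, Matrix.mulVec]
    rfl
  have rhs : ⟪e, e⟫ = f ⬝ᵥ f := by
    rw [csv_inner_eq_sum]; rfl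
  rw [lhs, rhs, Matrix.mulVec_transpose, ← Matrix.dotProduct_mulVec,
    Matrix.mulVec_mulVec, ← Matrix.mul_assoc, Matrix.mul_nonsing_inv _ hdet, Matrix.one_mulVec]

theorem stmt_18 (n m : ℕ) (hmn : n ≤ m) (r : ℝ) (hr : 0 < r) (ν : ℝ) (hν : 0 < ν)
    (y : Fin (m + 1) → EuclideanSpace ℝ (Fin n))
    (hyS : ∀ j, y j ∈ closedBall (y 0) r)
    (L : Matrix (Fin n) (Fin m) ℝ)
    (hL : L = Matrix.of fun i j => (y j.succ i - y 0 i) / r)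
    (hrank : L.rank = n)
    (F : EuclideanSpace ℝ (Fin n) → ℝ)
    (F' : EuclideanSpace ℝ (Fin n) → EuclideanSpace ℝ (Fin n))
    (hF : ∀ x ∈ closedBall (y 0) r, HasGradientAt F (F' x) x)
    (hlip : ∀ u ∈ closedBall (y 0) r, ∀ v ∈ closedBall (y 0) r, ‖F' u - F' v‖ ≤ ν * ‖u - v‖)
    (c : ℝ) (g : EuclideanSpace ℝ (Fin n)) (G : Matrix (Fin n) (Fin n) ℝ) (hG : G.IsSymm)
    (hint : ∀ j, c + ⟪g, y j⟫ + ⟪y j, mApp G (y j)⟫ / 2 = F (y j)) :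
    ∀ x ∈ closedBall (y 0) r,
      ‖(mApp G x + g) - F' x‖ ≤
        (5 * Real.sqrt m / 2) * l2op (Lᵀ * (L * Lᵀ)⁻¹) * (ν + l2op G) * r := by
  intro x hx
  set e : EuclideanSpace ℝ (Fin n) := (mApp G x + g) - F' x with he
  -- step: for each index k of Fin (m+1), the "anchor" identity
  have anchor : ∀ k : Fin (m + 1),
      ⟪e, y k - x⟫ = (F x - (c + ⟪g, x⟫ + ⟪x, mApp G x⟫ / 2))
        - ⟪y k - x, mApp G (y k - x)⟫ / 2
        + (F (y k) - F x - ⟪F' x, y k - x⟫) := by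
    intro k
    have hq := csv_quad_expand G hG g x (y k - x)
    rw [add_sub_cancel] at hq
    have hsum : c + ⟪g, y k⟫ + ⟪y k, mApp G (y k)⟫ / 2
        - (c + ⟪g, x⟫ + ⟪x, mApp G x⟫ / 2)
        = ⟪mApp G x + g, y k - x⟫ + ⟪y k - x, mApp G (y k - x)⟫ / 2 := by
      rw [← hq]; ring
    have hE : ⟪e, y k - x⟫ = ⟪mApp G x + g, y k - x⟫ - ⟪F' x, y k - x⟫ := by
      rw [he, inner_sub_left]
    rw [hE]
    have := hint k
    nlinarith [hsum, this]
  -- radius bounds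
  have hd0 : ‖y 0 - x‖ ≤ r := by
    rw [← norm_sub_rev]
    simpa [dist_eq_norm] using hx
  have hdk : ∀ j : Fin m, ‖y j.succ - x‖ ≤ 2 * r := by
    intro j
    calc ‖y j.succ - x‖ = ‖(y j.succ - y 0) + (y 0 - x)‖ := by abel_nf
      _ ≤ ‖y j.succ - y 0‖ + ‖y 0 - x‖ := norm_add_le _ _
      _ ≤ r + r := by
          refine add_le_add ?_ hd0
          simpa [dist_eq_norm] using hyS j.succ
      _ = 2 * r := by ring
  -- quadratic form bound
  have hquadb : ∀ (d : EuclideanSpace ℝ (Fin n)), |⟪d, mApp G d⟫| ≤ l2op G * ‖d‖ ^ 2 := by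
    intro d
    calc |⟪d, mApp G d⟫| ≤ ‖d‖ * ‖mApp G d‖ := by
          rw [← Real.norm_eq_abs]; exact norm_inner_le_norm _ _
      _ ≤ ‖d‖ * (l2op G * ‖d‖) := by
          refine mul_le_mul_of_nonneg_left (csv_tl_norm_le G d) (norm_nonneg _)
      _ = l2op G * ‖d‖ ^ 2 := by ring
  -- Taylor remainders
  have hTay : ∀ k : Fin (m + 1), |F (y k) - F x - ⟪F' x, y k - x⟫| ≤ ν / 2 * ‖y k - x‖ ^ 2 :=
    fun k => csv_taylor (y 0) r ν hν.le F F' hF hlip x hx (y k) (hyS k)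
  -- per-j inner bound
  have hinner : ∀ j : Fin m, |⟪e, y j.succ - y 0⟫| ≤ 5 / 2 * (ν + l2op G) * r ^ 2 := by
    intro j
    have h1 := anchor j.succ
    have h2 := anchor 0
    have hsub : ⟪e, y j.succ - y 0⟫ = ⟪e, y j.succ - x⟫ - ⟪e, y 0 - x⟫ := by
      rw [← inner_sub_right]; congr 1; abel
    have hT1 := hTay j.succ
    have hT2 := hTay 0
    have hQ1 := hquadb (y j.succ - x)
    have hQ2 := hquadb (y 0 - x)
    have hn1 : ‖y j.succ - x‖ ^ 2 ≤ (2 * r) ^ 2 :=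
      pow_le_pow_left₀ (norm_nonneg _) (hdk j) 2
    have hn2 : ‖y 0 - x‖ ^ 2 ≤ r ^ 2 := pow_le_pow_left₀ (norm_nonneg _) hd0 2
    have hGn : 0 ≤ l2op G := csv_l2op_nonneg G
    have hT1' : |F (y j.succ) - F x - ⟪F' x, y j.succ - x⟫| ≤ ν / 2 * (2 * r) ^ 2 :=
      hT1.trans (mul_le_mul_of_nonneg_left hn1 (by positivity))
    have hT2' : |F (y 0) - F x - ⟪F' x, y 0 - x⟫| ≤ ν / 2 * r ^ 2 :=
      hT2.trans (mul_le_mul_of_nonneg_left hn2 (by positivity))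
    have hQ1' : |⟪y j.succ - x, mApp G (y j.succ - x)⟫| ≤ l2op G * (2 * r) ^ 2 :=
      hQ1.trans (mul_le_mul_of_nonneg_left hn1 hGn)
    have hQ2' : |⟪y 0 - x, mApp G (y 0 - x)⟫| ≤ l2op G * r ^ 2 :=
      hQ2.trans (mul_le_mul_of_nonneg_left hn2 hGn)
    have hrewr : ⟪e, y j.succ - y 0⟫
        = (F (y j.succ) - F x - ⟪F' x, y j.succ - x⟫)
          - (F (y 0) - F x - ⟪F' x, y 0 - x⟫)
          - (⟪y j.succ - x, mApp G (y j.succ - x)⟫ - ⟪y 0 - x, mApp G (y 0 - x)⟫) / 2 := by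
      rw [hsub, h1, h2]; ring
    rw [hrewr]
    have e1 := abs_le.mp hT1'
    have e2 := abs_le.mp hT2'
    have e3 := abs_le.mp hQ1'
    have e4 := abs_le.mp hQ2'
    rw [abs_le]
    constructor <;> linarith
  -- determinant
  have hdet := csv_llt_unit L hrank
  -- row vector bound
  have hrow : ∀ j : Fin m,
      |(Matrix.toEuclideanLin Lᵀ e : EuclideanSpace ℝ (Fin m)) j|
        ≤ 5 / 2 * (ν + l2op G) * r := by
    intro j
    have happ : (Matrix.toEuclideanLin Lᵀ e : EuclideanSpace ℝ (Fin m)) j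
        = ⟪y j.succ - y 0, e⟫ / r := by
      rw [csv_tl_apply, csv_inner_eq_sum]
      rw [Finset.sum_div]
      apply Finset.sum_congr rfl
      intro i _
      rw [hL]
      simp [Matrix.transpose_apply]
      ring
    rw [happ, abs_div, abs_of_pos hr, div_le_iff₀ hr, real_inner_comm]
    calc |⟪e, y j.succ - y 0⟫| ≤ 5 / 2 * (ν + l2op G) * r ^ 2 := hinner j
      _ = 5 / 2 * (ν + l2op G) * r * r := by ring
  -- norm of row vector
  have hb0 : 0 ≤ 5 / 2 * (ν + l2op G) * r := by
    have := csv_l2op_nonneg G; positivity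
  have hwnorm : ‖(Matrix.toEuclideanLin Lᵀ e : EuclideanSpace ℝ (Fin m))‖
      ≤ Real.sqrt m * (5 / 2 * (ν + l2op G) * r) := by
    set w := (Matrix.toEuclideanLin Lᵀ e : EuclideanSpace ℝ (Fin m)) with hw
    rw [EuclideanSpace.norm_eq]
    have hsumle : ∑ j, ‖w j‖ ^ 2 ≤ (m : ℝ) * (5 / 2 * (ν + l2op G) * r) ^ 2 := by
      calc ∑ j, ‖w j‖ ^ 2 ≤ ∑ _j : Fin m, (5 / 2 * (ν + l2op G) * r) ^ 2 := by
            apply Finset.sum_le_sum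
            intro j _
            have := hrow j
            rw [Real.norm_eq_abs]
            nlinarith [abs_nonneg (w j)]
        _ = (m : ℝ) * (5 / 2 * (ν + l2op G) * r) ^ 2 := by
            rw [Finset.sum_const]; simp [mul_comm]
    calc Real.sqrt (∑ j, ‖w j‖ ^ 2) ≤ Real.sqrt ((m : ℝ) * (5 / 2 * (ν + l2op G) * r) ^ 2) :=
          Real.sqrt_le_sqrt hsumle
      _ = Real.sqrt m * (5 / 2 * (ν + l2op G) * r) := by
          rw [Real.sqrt_mul (Nat.cast_nonneg m), Real.sqrt_sq hb0]
  -- main chain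
  have hNnorm := csv_tl_norm_le (Lᵀ * (L * Lᵀ)⁻¹) e
  have hsq : ‖e‖ ^ 2 ≤ (Real.sqrt m * (5 / 2 * (ν + l2op G) * r)) * (l2op (Lᵀ * (L * Lᵀ)⁻¹) * ‖e‖) := by
    have hid := csv_key_id L hdet e
    rw [← real_inner_self_eq_norm_sq, ← hid]
    calc ⟪(Matrix.toEuclideanLin Lᵀ e : EuclideanSpace ℝ (Fin m)),
          (Matrix.toEuclideanLin (Lᵀ * (L * Lᵀ)⁻¹) e : EuclideanSpace ℝ (Fin m))⟫
        ≤ ‖(Matrix.toEuclideanLin Lᵀ e : EuclideanSpace ℝ (Fin m))‖ *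
          ‖(Matrix.toEuclideanLin (Lᵀ * (L * Lᵀ)⁻¹) e : EuclideanSpace ℝ (Fin m))‖ :=
          real_inner_le_norm _ _
      _ ≤ (Real.sqrt m * (5 / 2 * (ν + l2op G) * r)) * (l2op (Lᵀ * (L * Lᵀ)⁻¹) * ‖e‖) := by
          apply mul_le_mul hwnorm hNnorm (norm_nonneg _)
          positivity
  rcases eq_or_lt_of_le (norm_nonneg e) with h0 | h0
  · rw [← h0]
    have := csv_l2op_nonneg (Lᵀ * (L * Lᵀ)⁻¹)
    have := csv_l2op_nonneg G
    positivity
  · have h2 : ‖e‖ * ‖e‖ ≤ ((Real.sqrt m * (5 / 2 * (ν + l2op G) * r)) * l2op (Lᵀ * (L * Lᵀ)⁻¹)) * ‖e‖ := by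
      nlinarith [hsq]
    have hle : ‖e‖ ≤ (Real.sqrt m * (5 / 2 * (ν + l2op G) * r)) * l2op (Lᵀ * (L * Lᵀ)⁻¹) :=
      le_of_mul_le_mul_right h2 h0
    calc ‖e‖ ≤ (Real.sqrt m * (5 / 2 * (ν + l2op G) * r)) * l2op (Lᵀ * (L * Lᵀ)⁻¹) := hle
      _ = (5 * Real.sqrt m / 2) * l2op (Lᵀ * (L * Lᵀ)⁻¹) * (ν + l2op G) * r := by ring
end
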